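/- arXiv:1311.6115 — 7 statements merged into one kernel-verified Lean document; each statement's English description precedes it below -/
import Mathlib

section
/- Let Γ be a group. On the free ℤ-module ℤ⟨Γ⟩ with basis {b_x : x a finite word over Γ}, define a product ⊗ recursively by the fusion rules: b_x ⊗ b_y = Σ_{x=u·t, y=t̄·v} b_{u·v} + Σ_{x=u·t, y=t̄·v, u≠∅, v≠∅} b_{u∗v}, where u·v denotes concatenation and u∗v denotes fusion (multiplying the last letter of u with the first letter of v), and t̄ is the involution of t. Then the unique ring homomorphism F from the free noncommutative polynomial ring ℤ⟨X_g : g ∈ Γ⟩ to (ℤ⟨Γ⟩, +, ⊗) sending X_g to b_g is surjective. -/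
/-- Involution on words: reverse and invert letters. -/
def wordInv {Γ : Type*} [Group Γ] (w : List Γ) : List Γ := (w.map (·⁻¹)).reverse

/-- Fusion of two words: multiply the last letter of `u` with the first letter of `v`. -/
def fuse {Γ : Type*} [Group Γ] (u v : List Γ) : List Γ :=
  match u.getLast?, v with
  | some a, b :: t => u.dropLast ++ (a * b) :: t
  | _, _ => u ++ v

open scoped Classical in
/-- The fusion product on basis elements:
`b_x ⊗ b_y = Σ_{x=u·t, y=t̄·v} b_{u·v} + Σ_{x=u·t, y=t̄·v, u≠∅, v≠∅} b_{u∗v}`. -/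
noncomputable def basisMul {Γ : Type*} [Group Γ] (x y : List Γ) : List Γ →₀ ℤ :=
  ∑ k ∈ Finset.range (min x.length y.length + 1),
    if wordInv (x.drop (x.length - k)) = y.take k then
      Finsupp.single (x.take (x.length - k) ++ y.drop k) 1 +
        (if k < x.length ∧ k < y.length then
          Finsupp.single (fuse (x.take (x.length - k)) (y.drop k)) 1 else 0)
    else 0

/-- The fusion product `⊗` on the free `ℤ`-module `ℤ⟨Γ⟩` on words over `Γ`,
extended bilinearly from the fusion rules. -/
noncomputable def fmul {Γ : Type*} [Group Γ] (α β : List Γ →₀ ℤ) : List Γ →₀ ℤ :=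
  α.sum fun x a => β.sum fun y b => (a * b) • basisMul x y

/-! The range of `F` is an additive subgroup closed under `⊗`, so it suffices that it contains
every basis word. By induction on length: `b_g ⊗ b_{h t} = b_{g h t} + b_{(gh) t} + [g⁻¹ = h] b_t`
expresses `b_{g h t}` through a product of shorter words and two shorter words. -/

section FusionRing

variable {Γ : Type*} [Group Γ]

theorem fmul_single_single (x y : List Γ) (a b : ℤ) :
    fmul (Finsupp.single x a) (Finsupp.single y b) = (a * b) • basisMul x y := by
  unfold fmul
  rw [Finsupp.sum_single_index, Finsupp.sum_single_index] <;> simp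

open scoped Classical in
theorem basisMul_singleton_cons (g h : Γ) (t : List Γ) :
    basisMul [g] (h :: t) = Finsupp.single (g :: h :: t) 1 +
      Finsupp.single ((g * h) :: t) 1 +
      (if g⁻¹ = h then Finsupp.single t 1 else 0) := by
  unfold basisMul
  rw [show min [g].length (h :: t).length + 1 = 2 by simp,
    Finset.sum_range_succ, Finset.sum_range_one]
  simp [wordInv, fuse, add_assoc]

variable (F : FreeAlgebra ℤ Γ →+ (List Γ →₀ ℤ))

theorem fmul_mem_range (hmul : ∀ a b : FreeAlgebra ℤ Γ, F (a * b) = fmul (F a) (F b))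
    {α β : List Γ →₀ ℤ} (hα : α ∈ F.range) (hβ : β ∈ F.range) : fmul α β ∈ F.range := by
  obtain ⟨p, rfl⟩ := hα
  obtain ⟨q, rfl⟩ := hβ
  exact ⟨p * q, hmul p q⟩

theorem single_one_mem_range
    (hmul : ∀ a b : FreeAlgebra ℤ Γ, F (a * b) = fmul (F a) (F b))
    (hone : F 1 = Finsupp.single ([] : List Γ) 1)
    (hgen : ∀ g : Γ, F (FreeAlgebra.ι ℤ g) = Finsupp.single [g] 1) :
    ∀ w : List Γ, Finsupp.single w 1 ∈ F.range
  | [] => ⟨1, hone⟩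
  | [g] => ⟨FreeAlgebra.ι ℤ g, hgen g⟩
  | g :: h :: t => by
    classical
    have hprod : fmul (Finsupp.single [g] 1) (Finsupp.single (h :: t) 1) ∈ F.range :=
      fmul_mem_range F hmul ⟨_, hgen g⟩ (single_one_mem_range hmul hone hgen (h :: t))
    have hfused := single_one_mem_range hmul hone hgen ((g * h) :: t)
    have hcancel : (if g⁻¹ = h then Finsupp.single t 1 else 0) ∈ F.range := by
      split_ifs
      exacts [single_one_mem_range hmul hone hgen t, zero_mem _]
    rw [fmul_single_single, one_mul, one_smul, basisMul_singleton_cons] at hprod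
    have hw := sub_mem (sub_mem hprod hcancel) hfused
    rwa [add_sub_cancel_right, add_sub_cancel_right] at hw
termination_by w => w.length

end FusionRing

/-- The (unique) ring homomorphism `F` from the free noncommutative polynomial ring
`ℤ⟨X_g : g ∈ Γ⟩` to `(ℤ⟨Γ⟩, +, ⊗)` sending `X_g` to `b_g` is surjective. -/
theorem fusion_ringHom_surjective {Γ : Type*} [Group Γ]
    (F : FreeAlgebra ℤ Γ →+ (List Γ →₀ ℤ))
    (hmul : ∀ a b : FreeAlgebra ℤ Γ, F (a * b) = fmul (F a) (F b))
    (hone : F 1 = Finsupp.single ([] : List Γ) 1)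
    (hgen : ∀ g : Γ, F (FreeAlgebra.ι ℤ g) = Finsupp.single [g] 1) :
    Function.Surjective F := by
  intro α
  change α ∈ F.range
  induction α using Finsupp.induction_linear with
  | zero => exact zero_mem _
  | add _ _ hα hβ => exact add_mem hα hβ
  | single w b =>
    rw [← mul_one b, ← smul_eq_mul, ← Finsupp.smul_single]
    exact zsmul_mem (single_one_mem_range F hmul hone hgen w) b
end

section
/- The ring homomorphism F : ℤ⟨X_g : g ∈ Γ⟩ → (ℤ⟨Γ⟩, +, ⊗) defined by F(X_g) = b_g is injective; consequently (ℤ⟨Γ⟩, +, ⊗) is a free ring on the set Γ. -/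
/-! Under `F` the monomial `X_w` goes to `b_w` plus a combination of strictly shorter words, because
`b_x ⊗ b_y` is `b_{xy}` plus shorter words: every cancellation or fusion in the fusion rules shortens
the result. So `F` is unitriangular with respect to word length on the monomial basis of the free
algebra, and the coefficient of a longest monomial of a nonzero `p` survives in `F p`. -/

lemma length_fuse_of_ne_nil {Γ : Type*} [Group Γ] {u v : List Γ} (hu : u ≠ []) (hv : v ≠ []) :
    (fuse u v).length = u.length + v.length - 1 := by
  obtain ⟨u, a, rfl⟩ := List.eq_nil_or_concat' u |>.resolve_left hu
  obtain ⟨b, v, rfl⟩ := List.exists_cons_of_ne_nil hv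
  have hfuse : fuse (u ++ [a]) (b :: v) = u ++ (a * b) :: v := by simp [fuse]
  rw [hfuse]
  simp only [List.length_append, List.length_cons, List.length_nil]
  omega

lemma basisMul_apply_of_length_le {Γ : Type*} [Group Γ] {x y z : List Γ}
    (h : x.length + y.length ≤ z.length) :
    basisMul x y z = Finsupp.single (x ++ y) 1 z := by
  have shorter (w : List Γ) (hw : w.length < z.length) : Finsupp.single w (1 : ℤ) z = 0 :=
    Finsupp.single_eq_of_ne (by rintro rfl; omega)
  rw [basisMul, Finset.sum_range_succ', Finsupp.add_apply, Finsupp.finsetSum_apply,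
    Finset.sum_eq_zero]
  · have wordInv_nil : wordInv ([] : List Γ) = [] := rfl
    simp only [Nat.sub_zero, List.drop_length, List.take_zero, List.take_length, List.drop_zero]
    rw [zero_add, if_pos wordInv_nil, Finsupp.add_apply]
    split_ifs with hxy
    · rw [shorter (fuse x y), add_zero]
      rw [length_fuse_of_ne_nil (List.ne_nil_of_length_pos hxy.1) (List.ne_nil_of_length_pos hxy.2)]
      omega
    · rw [Finsupp.coe_zero, Pi.zero_apply, add_zero]
  · intro k hk
    simp only [Finset.mem_range, lt_min_iff] at hk
    have hlt : (x.take (x.length - (k + 1)) ++ y.drop (k + 1)).length < z.length := by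
      simp only [List.length_append, List.length_take, List.length_drop]
      omega
    split_ifs with hcancel hfuse <;>
      simp only [Finsupp.add_apply, Finsupp.coe_zero, Pi.zero_apply]
    · have htake : x.take (x.length - (k + 1)) ≠ [] :=
        List.ne_nil_of_length_pos (by simp only [List.length_take]; omega)
      have hdrop : y.drop (k + 1) ≠ [] :=
        List.ne_nil_of_length_pos (by simp only [List.length_drop]; omega)
      rw [shorter _ hlt, shorter (fuse _ _), add_zero]
      rw [length_fuse_of_ne_nil htake hdrop]
      simp only [List.length_append] at hlt
      omega
    · rw [shorter _ hlt, add_zero]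

lemma fmul_single_apply_of_length_le {Γ : Type*} [Group Γ] {x z : List Γ} {β : List Γ →₀ ℤ}
    (h : ∀ y ∈ β.support, x.length + y.length ≤ z.length) :
    fmul (Finsupp.single x 1) β z = β.mapDomain (x ++ ·) z := by
  classical
  rw [fmul, Finsupp.sum_single_index (by simp), Finsupp.mapDomain, Finsupp.sum_apply,
    Finsupp.sum_apply]
  refine Finsupp.sum_congr fun y hy => ?_
  simp only [Finsupp.smul_apply, basisMul_apply_of_length_le (h y hy), one_mul, smul_eq_mul,
    Finsupp.single_apply, mul_ite, mul_one, mul_zero]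

theorem FreeAlgebra.basisFreeMonoid_apply (R X : Type*) [CommSemiring R] (w : FreeMonoid X) :
    FreeAlgebra.basisFreeMonoid R X w = FreeMonoid.lift (FreeAlgebra.ι R) w := by
  simp [FreeAlgebra.basisFreeMonoid, FreeAlgebra.equivMonoidAlgebraFreeMonoid, AlgEquiv.ofAlgHom]

theorem Module.Basis.injective_of_unitriangular {ι R M κ β : Type*} [Ring R] [AddCommGroup M]
    [Module R M] [LinearOrder κ] (b : Module.Basis ι R M) (deg : ι → κ) (e : ι → β)
    (G : M →ₗ[R] β →₀ R) (diag : ∀ i, G (b i) (e i) = 1)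
    (upper : ∀ i j, i ≠ j → deg i ≤ deg j → G (b i) (e j) = 0) :
    Function.Injective G := by
  rw [injective_iff_map_eq_zero]
  intro m hm
  by_contra hm0
  have hsupp : (b.repr m).support.Nonempty := by
    simpa [Finsupp.support_nonempty_iff] using hm0
  obtain ⟨i, hi, hmax⟩ := Finset.exists_max_image _ deg hsupp
  have leading : G m (e i) = b.repr m i := by
    conv_lhs => rw [← b.linearCombination_repr m]
    rw [Finsupp.linearCombination_apply, map_finsuppSum, Finsupp.sum_apply, Finsupp.sum,
      Finset.sum_eq_single i]
    · simp [diag]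
    · intro j hj hji
      simp [upper j i hji (hmax j hj)]
    · exact fun hi' => absurd hi hi'
  rw [hm, Finsupp.zero_apply] at leading
  exact Finsupp.mem_support_iff.1 hi leading.symm

theorem map_prod_ι_apply_of_length_le {Γ : Type*} [Group Γ]
    {F : FreeAlgebra ℤ Γ →+ (List Γ →₀ ℤ)}
    (hmul : ∀ a b : FreeAlgebra ℤ Γ, F (a * b) = fmul (F a) (F b))
    (hone : F 1 = Finsupp.single ([] : List Γ) 1)
    (hgen : ∀ g : Γ, F (FreeAlgebra.ι ℤ g) = Finsupp.single [g] 1) (w : List Γ) :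
    ∀ z : List Γ, w.length ≤ z.length →
      F ((w.map (FreeAlgebra.ι ℤ)).prod) z = Finsupp.single w 1 z := by
  induction w with
  | nil => simp [hone]
  | cons g w ih =>
    intro z hz
    set β := F ((w.map (FreeAlgebra.ι ℤ)).prod)
    have hβ : ∀ y ∈ β.support, y.length ≤ w.length := by
      intro y hy
      by_contra! hlen
      rw [Finsupp.mem_support_iff, ih y hlen.le,
        Finsupp.single_eq_of_ne (by rintro rfl; omega)] at hy
      exact hy rfl
    have hlen (y : List Γ) (hy : y ∈ β.support) : [g].length + y.length ≤ z.length := by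
      have := hβ y hy
      simp only [List.length_cons, List.length_nil] at hz ⊢
      omega
    rw [List.map_cons, List.prod_cons, hmul, hgen, fmul_single_apply_of_length_le hlen]
    by_cases hzg : ∃ t, z = [g] ++ t
    · obtain ⟨t, rfl⟩ := hzg
      have cons_injective : Function.Injective ([g] ++ · : List Γ → List Γ) :=
        List.append_right_injective [g]
      rw [Finsupp.mapDomain_apply cons_injective, ih t (by simpa using hz),
        ← Finsupp.single_apply_left cons_injective]
      rfl
    · push Not at hzg
      rw [Finsupp.mapDomain_of_notMem_range _ _ (by simpa [eq_comm] using hzg)]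
      exact (Finsupp.single_eq_of_ne (hzg w)).symm

/-- The ring homomorphism `F : ℤ⟨X_g : g ∈ Γ⟩ → (ℤ⟨Γ⟩, +, ⊗)` with `F(X_g) = b_g`
is injective (hence, together with surjectivity, `(ℤ⟨Γ⟩, +, ⊗)` is a free ring on `Γ`). -/
theorem fusion_ringHom_injective {Γ : Type*} [Group Γ]
    (F : FreeAlgebra ℤ Γ →+ (List Γ →₀ ℤ))
    (hmul : ∀ a b : FreeAlgebra ℤ Γ, F (a * b) = fmul (F a) (F b))
    (hone : F 1 = Finsupp.single ([] : List Γ) 1)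
    (hgen : ∀ g : Γ, F (FreeAlgebra.ι ℤ g) = Finsupp.single [g] 1) :
    Function.Injective F := by
  have leading (v w : FreeMonoid Γ) (hvw : v.toList.length ≤ w.toList.length) :
      F (FreeAlgebra.basisFreeMonoid ℤ Γ v) w.toList = Finsupp.single v.toList 1 w.toList := by
    rw [FreeAlgebra.basisFreeMonoid_apply, FreeMonoid.lift_apply]
    exact map_prod_ι_apply_of_length_le hmul hone hgen _ _ hvw
  refine (FreeAlgebra.basisFreeMonoid ℤ Γ).injective_of_unitriangular (fun w => w.toList.length)
    FreeMonoid.toList { F with map_smul' := map_zsmul F } (fun w => ?_) (fun v w hvw hle => ?_)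
  · exact (leading w w le_rfl).trans Finsupp.single_eq_same
  · exact (leading v w hle).trans
      (Finsupp.single_eq_of_ne (FreeMonoid.toList.injective.ne hvw.symm))
end

section
/- In (ℤ⟨Γ⟩, +, ⊗) with the fusion product, for any two words w_1, w_2 over Γ, the coefficient of the empty word b_∅ in b_{w_1} ⊗ b_{w̄_2} equals 1 if w_1 = w_2 and 0 otherwise. In particular, the bilinear form (α, β) ↦ coefficient of b_∅ in α ⊗ β̄ is non-degenerate on ℤ⟨Γ⟩. -/
open scoped Classical

section Aux
variable {Γ : Type*} [Group Γ]

lemma wordInv_length (w : List Γ) : (wordInv w).length = w.length := by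
  simp [wordInv]

lemma wordInv_injective : Function.Injective (wordInv (Γ := Γ)) := by
  intro a b h
  simpa [wordInv, List.map_reverse, List.map_map, Function.comp] using
    congrArg (fun l => (l.reverse.map (·⁻¹))) h

lemma fuse_ne_nil (u v : List Γ) (hv : v ≠ []) : fuse u v ≠ [] := by
  obtain ⟨b, t, rfl⟩ := List.exists_cons_of_ne_nil hv
  unfold fuse
  cases h : u.getLast? with
  | none => simp
  | some a => simp

lemma basisMul_nil_coeff (x y : List Γ) :
    basisMul x y [] = if wordInv x = y then 1 else 0 := by
  unfold basisMul
  rw [Finsupp.finset_sum_apply]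
  by_cases h : wordInv x = y
  · have hlen : y.length = x.length := by rw [← h, wordInv_length]
    rw [if_pos h, Finset.sum_eq_single x.length]
    · have hc : wordInv (x.drop (x.length - x.length)) = y.take x.length := by
        simp [h, ← hlen]
      rw [if_pos hc, Finsupp.add_apply, if_neg (by omega : ¬(x.length < x.length ∧ x.length < y.length))]
      simp [← hlen]
    · intro k hk hkne
      rw [Finset.mem_range, hlen, min_self] at hk
      have hklt : k < x.length := lt_of_le_of_ne (Nat.lt_succ_iff.mp hk) hkne
      by_cases hcond : wordInv (x.drop (x.length - k)) = y.take k
      · have h1 : x.take (x.length - k) ++ y.drop k ≠ [] := by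
          have : x.length - k ≠ 0 := Nat.sub_ne_zero_of_lt hklt
          intro hco
          rcases List.append_eq_nil_iff.mp hco with ⟨ht, _⟩
          have := congrArg List.length ht
          simp [min_eq_left (Nat.sub_le _ _)] at this
          omega
        have h2 : y.drop k ≠ [] := by
          intro hco
          have := congrArg List.length hco
          simp at this
          omega
        rw [if_pos hcond, Finsupp.add_apply, if_pos ⟨hklt, hlen ▸ hklt⟩,
          Finsupp.single_apply, if_neg h1, Finsupp.single_apply,
          if_neg (fuse_ne_nil _ _ h2)]
        simp
      · rw [if_neg hcond]; simp
    · intro hx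
      exact absurd (by rw [Finset.mem_range, hlen, min_self]; omega) hx
  · rw [if_neg h]
    apply Finset.sum_eq_zero
    intro k hk
    rw [Finset.mem_range] at hk
    have hkx : k ≤ x.length := le_trans (Nat.lt_succ_iff.mp hk) (min_le_left _ _)
    have hky : k ≤ y.length := le_trans (Nat.lt_succ_iff.mp hk) (min_le_right _ _)
    by_cases hcond : wordInv (x.drop (x.length - k)) = y.take k
    · have h1 : x.take (x.length - k) ++ y.drop k ≠ [] := by
        intro hco
        rcases List.append_eq_nil_iff.mp hco with ⟨ht, hd⟩
        have hxl := congrArg List.length ht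
        have hyl := congrArg List.length hd
        simp [min_eq_left (Nat.sub_le _ _)] at hxl hyl
        have hkx' : k = x.length := by omega
        have hky' : k = y.length := by omega
        apply h
        rw [hkx'] at hcond
        simp at hcond
        rw [hcond, ← hkx', hky', List.take_length]
      rw [if_pos hcond, Finsupp.add_apply, Finsupp.single_apply, if_neg h1]
      by_cases h2 : k < x.length ∧ k < y.length
      · have h3 : y.drop k ≠ [] := by
          intro hco
          have := congrArg List.length hco
          simp at this
          omega
        rw [if_pos h2, Finsupp.single_apply, if_neg (fuse_ne_nil _ _ h3)]
        simp
      · rw [if_neg h2]; simp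
    · rw [if_neg hcond]; simp

lemma fmul_single_nil (α : List Γ →₀ ℤ) (w : List Γ) :
    fmul α (Finsupp.single (wordInv w) 1) [] = α w := by
  unfold fmul
  rw [Finsupp.sum_apply]
  have : ∀ x : List Γ, ∀ a : ℤ,
      ((Finsupp.single (wordInv w) 1).sum fun y b => (a * b) • basisMul x y) [] =
        if x = w then a else 0 := by
    intro x a
    rw [Finsupp.sum_single_index (by simp)]
    rw [Finsupp.smul_apply, basisMul_nil_coeff]
    by_cases hx : x = w
    · rw [if_pos (by rw [hx]), if_pos hx]; simp
    · rw [if_neg (fun e => hx (wordInv_injective e)), if_neg hx]; simp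
  have hc : (α.sum fun x a => ((Finsupp.single (wordInv w) 1).sum
      fun y b => (a * b) • basisMul x y) []) =
      α.sum fun x a => if x = w then a else 0 :=
    Finsupp.sum_congr fun x _ => this x (α x)
  rw [hc]
  unfold Finsupp.sum
  rw [Finset.sum_ite_eq' α.support w fun x => α x]
  split_ifs with hw
  · rfl
  · exact (Finsupp.notMem_support_iff.mp hw).symm

end Aux

/-- For any two words `w₁, w₂` over `Γ`, the coefficient of the empty word `b_∅` in
`b_{w₁} ⊗ b_{w̄₂}` is `1` if `w₁ = w₂` and `0` otherwise; consequently the bilinear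
form `(α, β) ↦ (coefficient of b_∅ in α ⊗ β̄)` is non-degenerate on `ℤ⟨Γ⟩`. -/
theorem fusion_pairing_nondegenerate {Γ : Type*} [Group Γ] :
    (∀ w₁ w₂ : List Γ,
      (fmul (Finsupp.single w₁ 1) (Finsupp.single (wordInv w₂) 1)) [] =
        (if w₁ = w₂ then (1 : ℤ) else 0)) ∧
    (∀ α : List Γ →₀ ℤ,
      (∀ β : List Γ →₀ ℤ, (fmul α (Finsupp.mapDomain wordInv β)) [] = 0) → α = 0) := by
  constructor
  · intro w₁ w₂
    rw [fmul_single_nil, Finsupp.single_apply]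
  · intro α hα
    ext w
    have := hα (Finsupp.single w 1)
    rw [Finsupp.mapDomain_single, fmul_single_nil] at this
    simpa using this
end

section
/- Let Γ be a group with identity e, and let g_1,…,g_k ∈ Γ and x = (x_1,…,x_l) be a word arising from a surjective non-decreasing map σ : D_σ → {1,…,l} on a subset D_σ ⊆ {1,…,k} via x_j = Π_{σ(i)=j} g_i. Set P_k := (b_{g_1} + δ_{g_1,e}·1) ⊗ ⋯ ⊗ (b_{g_k} + δ_{g_k,e}·1) in (ℤ⟨Γ⟩, +, ⊗). Then the coefficient of b_x in P_k equals the number of non-crossing partitions p of the set with upper row (x_1,…,x_l) and lower row (g_1,…,g_k) such that in each block the product of the upper labels equals the product of the lower labels, each block contains at most one upper point, and each block contains at least one lower point. -/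
open scoped Classical

/-- Linear position of the points of a partition diagram with `l` upper points
(read left to right) and `k` lower points: upper points first, lower points in
reversed order, giving the standard cyclic order on the boundary of the disc. -/
def ncPos (l k : ℕ) : Fin l ⊕ Fin k → ℕ :=
  Sum.elim (fun i => (i : ℕ)) (fun j => l + (k - 1 - (j : ℕ)))

/-- A partition of `l` upper and `k` lower points (as a setoid) is non-crossing. -/
def NonCrossing (l k : ℕ) (P : Setoid (Fin l ⊕ Fin k)) : Prop :=
  ¬ ∃ a b c d : Fin l ⊕ Fin k,
      ncPos l k a < ncPos l k b ∧ ncPos l k b < ncPos l k c ∧ ncPos l k c < ncPos l k d ∧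
      P.r a c ∧ P.r b d ∧ ¬ P.r a b

/-- Ordered product of the labels indexed by a finite set of positions,
taken in increasing (left-to-right) order. -/
noncomputable def orderedProd {Γ : Type*} [Group Γ] {m : ℕ} (f : Fin m → Γ)
    (s : Finset (Fin m)) : Γ :=
  ((s.sort (· ≤ ·)).map f).prod

/-- `NCprime x g` is the set `NC'_Γ((x_1,…,x_l); (g_1,…,g_k))` of non-crossing partitions
of `l` upper points labelled by `x` and `k` lower points labelled by `g` such that in each
block the product of the upper labels equals the product of the lower labels, each block
contains at most one upper point, and each block contains at least one lower point. -/
noncomputable def NCprime {Γ : Type*} [Group Γ] {l k : ℕ} (x : Fin l → Γ) (g : Fin k → Γ) :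
    Set (Setoid (Fin l ⊕ Fin k)) :=
  {P | NonCrossing l k P ∧ ∀ p : Fin l ⊕ Fin k,
    orderedProd x (Finset.univ.filter fun i : Fin l => P.r (Sum.inl i) p) =
      orderedProd g (Finset.univ.filter fun j : Fin k => P.r (Sum.inr j) p) ∧
    (Finset.univ.filter fun i : Fin l => P.r (Sum.inl i) p).card ≤ 1 ∧
    (Finset.univ.filter fun j : Fin k => P.r (Sum.inr j) p).Nonempty}

/-- `P_k = (b_{g_1} + δ_{g_1,e}1) ⊗ ⋯ ⊗ (b_{g_k} + δ_{g_k,e}1)` in `(ℤ⟨Γ⟩, +, ⊗)`. -/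
noncomputable def Pk {Γ : Type*} [Group Γ] {k : ℕ} (g : Fin k → Γ) : List Γ →₀ ℤ :=
  (List.ofFn fun i : Fin k =>
      Finsupp.single [g i] (1 : ℤ) + (if g i = 1 then Finsupp.single [] 1 else 0)).foldl
    fmul (Finsupp.single ([] : List Γ) 1)

/-!
Induct on `k`. Write `h = g_{k+1}` and `[w]` for the coefficient of `b_w` in `P_k`. Since
`P_{k+1} = P_k ⊗ (b_h + δ_{h,e})`, fusing with the single letter `b_h` shows that the coefficient
of `b_{v c}` in `P_{k+1}` is `δ_{c,h} [v] + [v (c h⁻¹)] + [v c h⁻¹] + δ_{h,e} [v c]`, and that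
of `b_∅` is `[h⁻¹] + δ_{h,e} [∅]`.

On the side of `NC'`, sort the partitions by the block of the last lower point `q`. By
non-crossingness an upper point in that block can only be the last one, `x_l`. If the block is
`{x_l, q}` it is removed, which needs `x_l = h`; if it contains `x_l`, `q` and further lower points,
`q` is deleted and `x_l` relabelled `x_l h⁻¹`; if it has no upper point but further lower points,
`q` becomes a new last upper point labelled `h⁻¹`; if it is `{q}` it is removed, which needs
`h = e`. Each operation is a bijection onto an `NC'` set with `k` lower points, and the four
counts match the four terms above.
-/

lemma List.ofFn_snoc {α : Type*} {n : ℕ} (f : Fin n → α) (a : α) :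
    List.ofFn (Fin.snoc f a : Fin (n + 1) → α) = List.ofFn f ++ [a] := by
  rw [List.ofFn_succ', List.concat_eq_append]
  simp

section Fusion

variable {Γ : Type*} [Group Γ]

noncomputable def letterFactor (h : Γ) : List Γ →₀ ℤ :=
  Finsupp.single [h] 1 + if h = 1 then Finsupp.single [] 1 else 0

lemma Pk_zero (g : Fin 0 → Γ) : Pk g = Finsupp.single [] 1 := by
  simp [Pk]

lemma Pk_succ {k : ℕ} (g : Fin (k + 1) → Γ) :
    Pk g = fmul (Pk fun i : Fin k => g i.castSucc) (letterFactor (g (Fin.last k))) := by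
  rw [Pk, List.ofFn_succ', List.concat_eq_append, List.foldl_concat]
  rfl

lemma basisMul_nil_left (y : List Γ) : basisMul [] y = Finsupp.single y 1 := by
  simp [basisMul, wordInv]

lemma basisMul_nil_right (x : List Γ) : basisMul x [] = Finsupp.single x 1 := by
  simp [basisMul, wordInv]

-- The overlap `t` of the fusion rule has length 0 (concatenation and fusion) or 1 (if `b h = e`).
lemma basisMul_append_singleton_singleton (r : List Γ) (b h : Γ) :
    basisMul (r ++ [b]) [h] =
      Finsupp.single (r ++ [b, h]) 1 + Finsupp.single (r ++ [b * h]) 1 +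
        if b = h⁻¹ then Finsupp.single r 1 else 0 := by
  have htake : (r ++ [b]).take (r.length + 1) = r ++ [b] := List.take_of_length_le (by simp)
  simp [basisMul, Finset.sum_range_succ, wordInv, fuse, htake, inv_eq_iff_eq_inv]

lemma basisMul_singleton_apply_nil (x : List Γ) (h : Γ) :
    basisMul x [h] [] = if x = [h⁻¹] then 1 else 0 := by
  rcases List.eq_nil_or_concat x with rfl | ⟨r, b, rfl⟩
  · simp [basisMul_nil_left]
  · rw [List.concat_eq_append, basisMul_append_singleton_singleton]
    by_cases hb : b = h⁻¹ <;> simp [Finsupp.single_apply, hb, List.append_eq_singleton_iff]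

lemma basisMul_singleton_apply_append_singleton (x v : List Γ) (c h : Γ) :
    basisMul x [h] (v ++ [c]) =
      (if x = v ∧ c = h then 1 else 0) + (if x = v ++ [c * h⁻¹] then 1 else 0) +
        if x = v ++ [c] ++ [h⁻¹] then 1 else 0 := by
  rcases List.eq_nil_or_concat x with rfl | ⟨r, b, rfl⟩
  · simp [basisMul_nil_left, Finsupp.single_apply, List.singleton_eq_append_iff]
  · rw [List.concat_eq_append, basisMul_append_singleton_singleton]
    have e1 : r ++ [b, h] = v ++ [c] ↔ r ++ [b] = v ∧ c = h := by
      rw [show r ++ [b, h] = r ++ [b] ++ [h] by simp, List.append_singleton_inj, eq_comm (a := h)]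
    have e2 : r ++ [b * h] = v ++ [c] ↔ r ++ [b] = v ++ [c * h⁻¹] := by
      simp only [List.append_singleton_inj, eq_mul_inv_iff_mul_eq]
    have e3 : (b = h⁻¹ ∧ r = v ++ [c]) ↔ r ++ [b] = v ++ [c] ++ [h⁻¹] := by
      rw [List.append_singleton_inj, and_comm]
    simp only [Finsupp.add_apply, Finsupp.single_apply, e1, e2, ← e3, ite_and,
      apply_ite (fun f : List Γ →₀ ℤ => f (v ++ [c])), Finsupp.coe_zero, Pi.zero_apply]

lemma fmul_letterFactor_apply (α : List Γ →₀ ℤ) (h : Γ) (w : List Γ) :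
    fmul α (letterFactor h) w =
      (α.sum fun x a => a * basisMul x [h] w) + if h = 1 then α w else 0 := by
  have hfactor : ∀ x a, ((letterFactor h).sum fun y b => (a * b) • basisMul x y) =
      a • basisMul x [h] + if h = 1 then a • Finsupp.single x 1 else 0 := by
    intro x a
    by_cases h1 : h = 1
    · rw [letterFactor, if_pos h1, if_pos h1,
        Finsupp.sum_add_index' (by simp) (fun _ _ _ => by rw [mul_add, add_smul])]
      simp [basisMul_nil_right]
    · simp [letterFactor, h1]
  simp only [fmul, hfactor, Finsupp.sum_apply, Finsupp.add_apply, Finsupp.smul_apply, smul_eq_mul,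
    Finsupp.sum_add]
  congr 1
  by_cases h1 : h = 1
  · simp only [h1, if_true, Finsupp.smul_apply, Finsupp.single_apply, smul_eq_mul, mul_ite,
      mul_one, mul_zero, Finsupp.sum_ite_self_eq']
  · simp [h1, Finsupp.sum]

lemma fmul_letterFactor_apply_nil (α : List Γ →₀ ℤ) (h : Γ) :
    fmul α (letterFactor h) [] = α [h⁻¹] + if h = 1 then α [] else 0 := by
  simp only [fmul_letterFactor_apply, basisMul_singleton_apply_nil, mul_ite, mul_one, mul_zero,
    Finsupp.sum_ite_self_eq']

lemma fmul_letterFactor_apply_append_singleton (α : List Γ →₀ ℤ) (h : Γ) (v : List Γ)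
    (c : Γ) :
    fmul α (letterFactor h) (v ++ [c]) =
      (if c = h then α v else 0) + α (v ++ [c * h⁻¹]) + α (v ++ [c] ++ [h⁻¹]) +
        if h = 1 then α (v ++ [c]) else 0 := by
  by_cases hc : c = h <;>
    simp only [fmul_letterFactor_apply, basisMul_singleton_apply_append_singleton, hc, and_true,
      and_false, if_true, if_false, mul_add, mul_ite, mul_one, mul_zero, Finsupp.sum_add,
      Finsupp.sum_ite_self_eq']
  simp [Finsupp.sum]

end Fusion

section CastSuccPreimage

variable {Γ : Type*} [Group Γ]

noncomputable def castSuccPreimage {m : ℕ} (s : Finset (Fin (m + 1))) : Finset (Fin m) :=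
  s.preimage Fin.castSucc (Fin.castSucc_injective m).injOn

@[simp]
lemma mem_castSuccPreimage {m : ℕ} {s : Finset (Fin (m + 1))} {i : Fin m} :
    i ∈ castSuccPreimage s ↔ i.castSucc ∈ s :=
  Finset.mem_preimage

lemma orderedProd_eq_prod_filter {m : ℕ} (f : Fin m → Γ) (s : Finset (Fin m)) :
    orderedProd f s = (((List.finRange m).filter (· ∈ s)).map f).prod := by
  rw [orderedProd, (Finset.sortedLT_sort s).eq_of_mem_iff
    ((List.sortedLT_finRange m).pairwise.filter (· ∈ s)).sortedLT (by simp)]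

@[simp]
lemma orderedProd_empty {m : ℕ} (f : Fin m → Γ) : orderedProd f ∅ = 1 := by
  simp [orderedProd]

@[simp]
lemma orderedProd_singleton {m : ℕ} (f : Fin m → Γ) (i : Fin m) : orderedProd f {i} = f i := by
  simp [orderedProd]

lemma orderedProd_eq_mul_last {m : ℕ} (f : Fin (m + 1) → Γ) (s : Finset (Fin (m + 1))) :
    orderedProd f s = orderedProd (fun i => f i.castSucc) (castSuccPreimage s) *
      if Fin.last m ∈ s then f (Fin.last m) else 1 := by
  rw [orderedProd_eq_prod_filter, orderedProd_eq_prod_filter, List.finRange_succ_last]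
  split_ifs <;> simp [List.filter_append, List.filter_map, Function.comp_def, *]

lemma card_eq_card_castSuccPreimage_add {m : ℕ} (s : Finset (Fin (m + 1))) :
    s.card = (castSuccPreimage s).card + if Fin.last m ∈ s then 1 else 0 := by
  have hcard : ∀ {n : ℕ} (t : Finset (Fin n)), t.card = ∑ i, if i ∈ t then 1 else 0 := by
    intro n t
    rw [← Finset.card_filter, Finset.filter_mem_eq_inter, Finset.univ_inter]
  simp only [hcard s, hcard (castSuccPreimage s), Fin.sum_univ_castSucc, mem_castSuccPreimage]

lemma nonempty_iff_castSuccPreimage_nonempty_or {m : ℕ} (s : Finset (Fin (m + 1))) :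
    s.Nonempty ↔ (castSuccPreimage s).Nonempty ∨ Fin.last m ∈ s := by
  simp only [Finset.Nonempty, mem_castSuccPreimage, Fin.exists_fin_succ']

end CastSuccPreimage

instance {β : Type*} [Finite β] : Finite (Setoid β) :=
  Finite.of_injective (fun P : Setoid β => P.r) fun _ _ h =>
    Setoid.ext fun a b => iff_of_eq (congr_fun (congr_fun h a) b)

lemma Set.ncard_eq_add_add_add {α : Type*} [Finite α] (S : Set α) (p q : α → Prop) :
    S.ncard = {a ∈ S | p a ∧ q a}.ncard + {a ∈ S | p a ∧ ¬ q a}.ncard +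
      {a ∈ S | ¬ p a ∧ q a}.ncard + {a ∈ S | ¬ p a ∧ ¬ q a}.ncard := by
  have hsplit : ∀ (T : Set α) (r : α → Prop),
      T.ncard = {a ∈ T | r a}.ncard + {a ∈ T | ¬ r a}.ncard := fun T r =>
    (Set.ncard_inter_add_ncard_sdiff_eq_ncard T {a | r a}).symm
  rw [hsplit S p, hsplit {a ∈ S | p a} q, hsplit {a ∈ S | ¬ p a} q,
    add_assoc _ _ (Set.ncard _)]
  simp only [Set.mem_ofPred_eq, and_assoc]

namespace Setoid

variable {α β : Type*}

/-- `P` together with the extra class `{none}`; pulling it back along `ρ : α → Option β` adds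
the fibre `ρ⁻¹ none` to (the pull-back of) `P` as one more block. -/
def optionSetoid (P : Setoid α) : Setoid (Option α) where
  r a b := Option.Rel P.r a b
  iseqv := by
    refine ⟨fun a => ?_, fun {a b} h => ?_, fun {a b c} h h' => ?_⟩
    · cases a <;> constructor; exact P.refl _
    · cases h <;> constructor; exact P.symm ‹_›
    · cases h <;> cases h' <;> constructor; exact P.trans ‹_› ‹_›

lemma comap_comap_optionSetoid (P : Setoid β) {ρ : α → Option β} {σ : β → α}
    (h : ∀ y, ρ (σ y) = some y) : (P.optionSetoid.comap ρ).comap σ = P :=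
  Setoid.ext fun a b => by
    change Option.Rel P.r (ρ (σ a)) (ρ (σ b)) ↔ P.r a b
    rw [h, h, Option.rel_some_some]

lemma comap_optionSetoid_comap (P : Setoid α) {ρ : α → Option β} {σ : β → α}
    (hρσ : ∀ a y, ρ a = some y ↔ σ y = a)
    (hblock : ∀ a b, ρ a = none → (P.r a b ↔ ρ b = none)) :
    (P.comap σ).optionSetoid.comap ρ = P := by
  refine Setoid.ext fun a b => ?_
  change Option.Rel (P.comap σ).r (ρ a) (ρ b) ↔ P.r a b
  rcases hρa : ρ a with _ | a' <;> rcases hρb : ρ b with _ | b'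
  · simp [hblock a b hρa, hρb]
  · simp [hblock a b hρa, hρb]
  · simp [(P.comm' ..).trans (hblock b a hρb), hρa]
  · rw [← (hρσ _ _).1 hρa, ← (hρσ _ _).1 hρb]
    exact Option.rel_some_some

end Setoid

section Diagram

variable {l k l' k' : ℕ}

lemma ncPos_injective (l k : ℕ) : Function.Injective (ncPos l k) := by
  rintro (i | j) (i' | j') h <;> simp only [ncPos, Sum.elim_inl, Sum.elim_inr] at h <;>
    first | omega | simp only [Sum.inl.injEq, Sum.inr.injEq]; omega

def NcMonotone (f : Fin l' ⊕ Fin k' → Fin l ⊕ Fin k) : Prop :=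
  ∀ a b, ncPos l' k' a ≤ ncPos l' k' b → ncPos l k (f a) ≤ ncPos l k (f b)

lemma NonCrossing.comap {P : Setoid (Fin l ⊕ Fin k)} (hP : NonCrossing l k P)
    {f : Fin l' ⊕ Fin k' → Fin l ⊕ Fin k} (hf : NcMonotone f) :
    NonCrossing l' k' (P.comap f) := by
  rintro ⟨a, b, c, d, hab, hbc, hcd, hac, hbd, hnab⟩
  simp only [Setoid.comap_rel] at hac hbd hnab
  have hP' := ncPos_injective l k
  rcases (hf _ _ hab.le).lt_or_eq with hab' | hab'
  · rcases (hf _ _ hbc.le).lt_or_eq with hbc' | hbc'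
    · rcases (hf _ _ hcd.le).lt_or_eq with hcd' | hcd'
      · exact hP ⟨_, _, _, _, hab', hbc', hcd', hac, hbd, hnab⟩
      · rw [hP' hcd'] at hac
        exact hnab (P.trans hac (P.symm hbd))
    · rw [← hP' hbc'] at hac
      exact hnab hac
  · rw [hP' hab'] at hnab
    exact hnab (P.refl _)

lemma NcMonotone.lt_of_lt {f : Fin l' ⊕ Fin k' → Fin l ⊕ Fin k} (hf : NcMonotone f)
    {a b : Fin l' ⊕ Fin k'} (h : ncPos l k (f a) < ncPos l k (f b)) :
    ncPos l' k' a < ncPos l' k' b :=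
  lt_of_not_ge fun h' => (hf b a h').not_gt h

lemma NonCrossing.comap_optionSetoid {P : Setoid (Fin l' ⊕ Fin k')} (hP : NonCrossing l' k' P)
    {ρ : Fin l ⊕ Fin k → Option (Fin l' ⊕ Fin k')}
    {σ : Fin l' ⊕ Fin k' → Fin l ⊕ Fin k} (hσ : NcMonotone σ)
    (hρσ : ∀ a y, ρ a = some y ↔ σ y = a)
    (hgap : ∀ a b c, ρ a = none → ρ c = none →
      ncPos l k a < ncPos l k b → ncPos l k b < ncPos l k c → False) :
    NonCrossing l k (P.optionSetoid.comap ρ) := by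
  rintro ⟨a, b, c, d, hab, hbc, hcd, hac, hbd, hnab⟩
  change Option.Rel P.r (ρ a) (ρ c) at hac
  change Option.Rel P.r (ρ b) (ρ d) at hbd
  change ¬ Option.Rel P.r (ρ a) (ρ b) at hnab
  rcases hρa : ρ a with _ | a' <;> rcases hρc : ρ c with _ | c' <;>
    simp only [hρa, hρc, Option.not_rel_none_some, Option.not_rel_some_none] at hac
  · exact hgap a b c hρa hρc hab hbc
  rcases hρb : ρ b with _ | b' <;> rcases hρd : ρ d with _ | d' <;>
    simp only [hρb, hρd, Option.not_rel_none_some, Option.not_rel_some_none] at hbd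
  · exact hgap b c d hρb hρd hbc hcd
  rw [hρa, hρb, Option.rel_some_some] at hnab
  rw [Option.rel_some_some] at hac hbd
  obtain rfl := (hρσ _ _).1 hρa
  obtain rfl := (hρσ _ _).1 hρb
  obtain rfl := (hρσ _ _).1 hρc
  obtain rfl := (hρσ _ _).1 hρd
  exact hP ⟨a', b', c', d', hσ.lt_of_lt hab, hσ.lt_of_lt hbc, hσ.lt_of_lt hcd, hac, hbd,
    hnab⟩

end Diagram

section Blocks

variable {Γ : Type*} [Group Γ] {l k : ℕ}

noncomputable def upSet (P : Setoid (Fin l ⊕ Fin k)) (p : Fin l ⊕ Fin k) : Finset (Fin l) :=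
  Finset.univ.filter fun i => P.r (Sum.inl i) p

noncomputable def lowSet (P : Setoid (Fin l ⊕ Fin k)) (p : Fin l ⊕ Fin k) : Finset (Fin k) :=
  Finset.univ.filter fun j => P.r (Sum.inr j) p

@[simp]
lemma mem_upSet {P : Setoid (Fin l ⊕ Fin k)} {p : Fin l ⊕ Fin k} {i : Fin l} :
    i ∈ upSet P p ↔ P.r (Sum.inl i) p := by
  simp [upSet]

@[simp]
lemma mem_lowSet {P : Setoid (Fin l ⊕ Fin k)} {p : Fin l ⊕ Fin k} {j : Fin k} :
    j ∈ lowSet P p ↔ P.r (Sum.inr j) p := by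
  simp [lowSet]

lemma upSet_congr {P : Setoid (Fin l ⊕ Fin k)} {p q : Fin l ⊕ Fin k} (h : P.r p q) :
    upSet P p = upSet P q := by
  ext i
  simp only [mem_upSet]
  exact ⟨fun hi => P.trans hi h, fun hi => P.trans hi (P.symm h)⟩

lemma lowSet_congr {P : Setoid (Fin l ⊕ Fin k)} {p q : Fin l ⊕ Fin k} (h : P.r p q) :
    lowSet P p = lowSet P q := by
  ext j
  simp only [mem_lowSet]
  exact ⟨fun hj => P.trans hj h, fun hj => P.trans hj (P.symm h)⟩

def BlockCond (x : Fin l → Γ) (g : Fin k → Γ) (U : Finset (Fin l)) (L : Finset (Fin k)) :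
    Prop :=
  orderedProd x U = orderedProd g L ∧ U.card ≤ 1 ∧ L.Nonempty

lemma mem_NCprime_iff {x : Fin l → Γ} {g : Fin k → Γ} {P : Setoid (Fin l ⊕ Fin k)} :
    P ∈ NCprime x g ↔ NonCrossing l k P ∧ ∀ p, BlockCond x g (upSet P p) (lowSet P p) :=
  Iff.rfl

variable {x : Fin l → Γ} {g : Fin k → Γ} {P : Setoid (Fin l ⊕ Fin k)}

lemma eq_of_rel_inl_inl (hP : P ∈ NCprime x g) {i i' : Fin l}
    (h : P.r (Sum.inl i) (Sum.inl i')) : i = i' :=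
  Finset.card_le_one.1 (hP.2 (Sum.inl i')).2.1 i (mem_upSet.2 h) i' (mem_upSet.2 (P.refl _))

lemma exists_rel_inr (hP : P ∈ NCprime x g) (p : Fin l ⊕ Fin k) : ∃ j, P.r (Sum.inr j) p := by
  obtain ⟨j, hj⟩ := (hP.2 p).2.2
  exact ⟨j, mem_lowSet.1 hj⟩

end Blocks

section BlockCond

variable {Γ : Type*} [Group Γ] {l k : ℕ}

@[simp]
lemma blockCond_singleton_singleton {x : Fin l → Γ} {g : Fin k → Γ} (i : Fin l) (j : Fin k) :
    BlockCond x g {i} {j} ↔ x i = g j := by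
  simp [BlockCond]

@[simp]
lemma blockCond_empty_singleton {x : Fin l → Γ} {g : Fin k → Γ} (j : Fin k) :
    BlockCond x g ∅ {j} ↔ g j = 1 := by
  simp [BlockCond, eq_comm]

lemma blockCond_iff_of_last_notMem_lower {x : Fin l → Γ} {g : Fin (k + 1) → Γ}
    {U : Finset (Fin l)} {L : Finset (Fin (k + 1))} (hL : Fin.last k ∉ L) :
    BlockCond x g U L ↔ BlockCond x (fun j => g j.castSucc) U (castSuccPreimage L) := by
  simp only [BlockCond, orderedProd_eq_mul_last g L, nonempty_iff_castSuccPreimage_nonempty_or L,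
    hL, if_false, mul_one, or_false]

lemma blockCond_iff_of_last_notMem_upper {x : Fin (l + 1) → Γ} {g : Fin k → Γ}
    {U : Finset (Fin (l + 1))} {L : Finset (Fin k)} (hU : Fin.last l ∉ U) :
    BlockCond x g U L ↔ BlockCond (fun i => x i.castSucc) g (castSuccPreimage U) L := by
  simp only [BlockCond, orderedProd_eq_mul_last x U, card_eq_card_castSuccPreimage_add U,
    hU, if_false, mul_one, add_zero]

lemma blockCond_iff_mergeLast {x : Fin (l + 1) → Γ} {g : Fin (k + 1) → Γ}
    {U : Finset (Fin (l + 1))} {L : Finset (Fin (k + 1))}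
    (hUL : Fin.last l ∈ U ↔ Fin.last k ∈ L)
    (hne : Fin.last k ∈ L → (castSuccPreimage L).Nonempty) :
    BlockCond x g U L ↔
      BlockCond (Fin.snoc (fun i : Fin l => x i.castSucc) (x (Fin.last l) * (g (Fin.last k))⁻¹))
        (fun j => g j.castSucc) U (castSuccPreimage L) := by
  by_cases hL : Fin.last k ∈ L
  · have hU := hUL.2 hL
    have hLne : L.Nonempty := ⟨_, hL⟩
    simp only [BlockCond, orderedProd_eq_mul_last _ U, orderedProd_eq_mul_last g L, hU, hL,
      if_true, Fin.snoc_castSucc, Fin.snoc_last, hne hL, hLne, and_true, ← mul_assoc,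
      mul_inv_eq_iff_eq_mul]
  · have hU : Fin.last l ∉ U := fun h => hL (hUL.1 h)
    simp only [BlockCond, orderedProd_eq_mul_last _ U, orderedProd_eq_mul_last g L,
      nonempty_iff_castSuccPreimage_nonempty_or L, hU, hL, if_false, Fin.snoc_castSucc, or_false,
      mul_one]

lemma blockCond_iff_lastLowerToUpper {x : Fin l → Γ} {g : Fin (k + 1) → Γ}
    {U : Finset (Fin l)} {U' : Finset (Fin (l + 1))} {L : Finset (Fin (k + 1))}
    (hU' : castSuccPreimage U' = U) (hUL : Fin.last l ∈ U' ↔ Fin.last k ∈ L)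
    (hlast : Fin.last k ∈ L → U = ∅ ∧ (castSuccPreimage L).Nonempty) :
    BlockCond x g U L ↔
      BlockCond (Fin.snoc x (g (Fin.last k))⁻¹) (fun j => g j.castSucc) U'
        (castSuccPreimage L) := by
  by_cases hL : Fin.last k ∈ L
  · obtain ⟨rfl, hne⟩ := hlast hL
    have hLne : L.Nonempty := ⟨_, hL⟩
    simp only [BlockCond, orderedProd_eq_mul_last _ U', orderedProd_eq_mul_last g L,
      card_eq_card_castSuccPreimage_add U', hU', hUL.2 hL, hL, if_true, Fin.snoc_castSucc,
      Fin.snoc_last, orderedProd_empty, one_mul, hne, hLne, Finset.card_empty, zero_add, le_refl,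
      zero_le, and_true, eq_comm (a := (1 : Γ)), mul_eq_one_iff_eq_inv]
    exact eq_comm
  · have hU : Fin.last l ∉ U' := fun h => hL (hUL.1 h)
    simp only [BlockCond, orderedProd_eq_mul_last _ U', orderedProd_eq_mul_last g L,
      card_eq_card_castSuccPreimage_add U', nonempty_iff_castSuccPreimage_nonempty_or L, hU', hU,
      hL, if_false, Fin.snoc_castSucc, mul_one, add_zero, or_false]

end BlockCond

section LastLower

variable {Γ : Type*} [Group Γ] {l k : ℕ}

def LastLowerLinksUpper (P : Setoid (Fin l ⊕ Fin (k + 1))) : Prop :=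
  ∃ i, P.r (Sum.inl i) (Sum.inr (Fin.last k))

def LastLowerLinksLower (P : Setoid (Fin l ⊕ Fin (k + 1))) : Prop :=
  ∃ j : Fin k, P.r (Sum.inr j.castSucc) (Sum.inr (Fin.last k))

variable {x : Fin (l + 1) → Γ} {g : Fin (k + 1) → Γ}
  {P : Setoid (Fin (l + 1) ⊕ Fin (k + 1))}

lemma eq_last_of_rel_lastLower (hP : P ∈ NCprime x g) {i : Fin (l + 1)}
    (h : P.r (Sum.inl i) (Sum.inr (Fin.last k))) : i = Fin.last l := by
  obtain ⟨j, hj⟩ := exists_rel_inr hP (Sum.inl (Fin.last l))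
  by_contra hi
  rcases Fin.eq_castSucc_or_eq_last j with ⟨j, rfl⟩ | rfl
  · -- `i < l` and `q` in one block, `l` and a lower point `j < k` in another: a crossing
    have hil : (i : ℕ) < l := Fin.val_lt_last hi
    refine hP.1 ⟨Sum.inl i, Sum.inl (Fin.last l), Sum.inr (Fin.last k), Sum.inr j.castSucc,
      ?_, ?_, ?_, h, P.symm hj, fun h' => hi (eq_of_rel_inl_inl hP h')⟩ <;>
    simp only [ncPos, Sum.elim_inl, Sum.elim_inr, Fin.val_last, Fin.val_castSucc] <;> omega
  · exact hi (eq_of_rel_inl_inl hP (P.trans h hj))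

lemma rel_lastUpper_lastLower (hP : P ∈ NCprime x g) (hU : LastLowerLinksUpper P) :
    P.r (Sum.inl (Fin.last l)) (Sum.inr (Fin.last k)) := by
  obtain ⟨i, hi⟩ := hU
  rwa [eq_last_of_rel_lastLower hP hi] at hi

end LastLower

section BoundaryMaps

variable {l k : ℕ}

def liftLower : Fin l ⊕ Fin k → Fin l ⊕ Fin (k + 1) :=
  Sum.map id Fin.castSucc

def liftBoth : Fin l ⊕ Fin k → Fin (l + 1) ⊕ Fin (k + 1) :=
  Sum.map Fin.castSucc Fin.castSucc

def uncastSucc {n : ℕ} : Fin (n + 1) → Option (Fin n) :=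
  Fin.lastCases none some

def unliftLower : Fin l ⊕ Fin (k + 1) → Option (Fin l ⊕ Fin k) :=
  Sum.elim (fun i => some (Sum.inl i)) fun j => (uncastSucc j).map Sum.inr

def unliftBoth : Fin (l + 1) ⊕ Fin (k + 1) → Option (Fin l ⊕ Fin k) :=
  Sum.elim (fun i => (uncastSucc i).map Sum.inl) fun j => (uncastSucc j).map Sum.inr

def mergeLastLower : Fin (l + 1) ⊕ Fin (k + 1) → Fin (l + 1) ⊕ Fin k :=
  Sum.elim Sum.inl (Fin.lastCases (Sum.inl (Fin.last l)) Sum.inr)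

def lastLowerToUpper : Fin l ⊕ Fin (k + 1) ≃ Fin (l + 1) ⊕ Fin k where
  toFun := Sum.elim (fun i => Sum.inl i.castSucc) (Fin.lastCases (Sum.inl (Fin.last l)) Sum.inr)
  invFun := Sum.elim (Fin.lastCases (Sum.inr (Fin.last k)) Sum.inl) fun j => Sum.inr j.castSucc
  left_inv := by
    rintro (i | j)
    · simp
    · cases j using Fin.lastCases <;> simp
  right_inv := by
    rintro (i | j)
    · cases i using Fin.lastCases <;> simp
    · simp

@[simp] lemma uncastSucc_castSucc {n : ℕ} (i : Fin n) : uncastSucc i.castSucc = some i := by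
  simp [uncastSucc]

@[simp] lemma uncastSucc_last {n : ℕ} : uncastSucc (Fin.last n) = none := by
  simp [uncastSucc]

lemma ncMonotone_liftLower : NcMonotone (liftLower : Fin l ⊕ Fin k → _) := by
  rintro (i | j) (i' | j') h <;>
    simp only [ncPos, liftLower, Sum.map_inl, Sum.map_inr, id_eq, Sum.elim_inl, Sum.elim_inr,
      Fin.val_castSucc] at h ⊢ <;> omega

lemma ncMonotone_liftBoth : NcMonotone (liftBoth : Fin l ⊕ Fin k → _) := by
  rintro (i | j) (i' | j') h <;>
    simp only [ncPos, liftBoth, Sum.map_inl, Sum.map_inr, Sum.elim_inl, Sum.elim_inr,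
      Fin.val_castSucc] at h ⊢ <;> omega

lemma ncMonotone_mergeLastLower :
    NcMonotone (mergeLastLower : Fin (l + 1) ⊕ Fin (k + 1) → _) := by
  rintro (i | j) (i' | j') h <;>
    [skip; cases j' using Fin.lastCases; cases j using Fin.lastCases;
      (cases j using Fin.lastCases <;> cases j' using Fin.lastCases)] <;>
    simp only [ncPos, mergeLastLower, Sum.elim_inl, Sum.elim_inr, Fin.lastCases_last,
      Fin.lastCases_castSucc, Fin.val_last, Fin.val_castSucc] at h ⊢ <;> omega

@[simp]
lemma ncPos_lastLowerToUpper (p : Fin l ⊕ Fin (k + 1)) :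
    ncPos (l + 1) k (lastLowerToUpper p) = ncPos l (k + 1) p := by
  rcases p with i | j
  · simp [lastLowerToUpper, ncPos]
  · cases j using Fin.lastCases
    · simp [lastLowerToUpper, ncPos]
    · simp only [ncPos, lastLowerToUpper, Equiv.coe_fn_mk, Sum.elim_inr, Fin.lastCases_castSucc,
        Fin.val_castSucc]
      omega

lemma ncMonotone_lastLowerToUpper : NcMonotone (lastLowerToUpper : Fin l ⊕ Fin (k + 1) → _) :=
  fun a b h => by simpa using h

lemma ncMonotone_lastLowerToUpper_symm :
    NcMonotone (lastLowerToUpper.symm : Fin (l + 1) ⊕ Fin k → Fin l ⊕ Fin (k + 1)) :=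
  fun a b h => by
    rwa [← ncPos_lastLowerToUpper, ← ncPos_lastLowerToUpper (lastLowerToUpper.symm b),
      Equiv.apply_symm_apply, Equiv.apply_symm_apply]

lemma liftLower_ne_last (p : Fin l ⊕ Fin k) : liftLower p ≠ Sum.inr (Fin.last k) := by
  rcases p with i | j <;> simp [liftLower, Fin.castSucc_ne_last]

lemma unliftLower_eq_some_iff {a : Fin l ⊕ Fin (k + 1)} {p : Fin l ⊕ Fin k} :
    unliftLower a = some p ↔ liftLower p = a := by
  rcases a with i | j
  · rcases p with i' | j' <;> simp [unliftLower, liftLower, eq_comm]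
  · cases j using Fin.lastCases <;> rcases p with i' | j' <;>
      simp [unliftLower, liftLower, eq_comm]

lemma unliftLower_eq_none_iff {a : Fin l ⊕ Fin (k + 1)} :
    unliftLower a = none ↔ a = Sum.inr (Fin.last k) := by
  rcases a with i | j
  · simp [unliftLower]
  · cases j using Fin.lastCases <;> simp [unliftLower]

lemma eq_last_or_eq_liftLower (a : Fin l ⊕ Fin (k + 1)) :
    a = Sum.inr (Fin.last k) ∨ ∃ p, liftLower p = a := by
  rcases h : unliftLower a with _ | p
  · exact Or.inl (unliftLower_eq_none_iff.1 h)
  · exact Or.inr ⟨p, unliftLower_eq_some_iff.1 h⟩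

lemma unliftBoth_eq_some_iff {a : Fin (l + 1) ⊕ Fin (k + 1)} {p : Fin l ⊕ Fin k} :
    unliftBoth a = some p ↔ liftBoth p = a := by
  rcases a with i | j
  · cases i using Fin.lastCases <;> rcases p with i' | j' <;> simp [unliftBoth, liftBoth, eq_comm]
  · cases j using Fin.lastCases <;> rcases p with i' | j' <;> simp [unliftBoth, liftBoth, eq_comm]

lemma unliftBoth_eq_none_iff {a : Fin (l + 1) ⊕ Fin (k + 1)} :
    unliftBoth a = none ↔ a = Sum.inl (Fin.last l) ∨ a = Sum.inr (Fin.last k) := by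
  rcases a with i | j
  · cases i using Fin.lastCases <;> simp [unliftBoth]
  · cases j using Fin.lastCases <;> simp [unliftBoth]

lemma eq_last_or_eq_liftBoth (a : Fin (l + 1) ⊕ Fin (k + 1)) :
    (a = Sum.inl (Fin.last l) ∨ a = Sum.inr (Fin.last k)) ∨ ∃ p, liftBoth p = a := by
  rcases h : unliftBoth a with _ | p
  · exact Or.inl (unliftBoth_eq_none_iff.1 h)
  · exact Or.inr ⟨p, unliftBoth_eq_some_iff.1 h⟩

@[simp]
lemma mergeLastLower_liftLower (p : Fin (l + 1) ⊕ Fin k) : mergeLastLower (liftLower p) = p := by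
  rcases p with i | j <;> simp [mergeLastLower, liftLower]

@[simp]
lemma mergeLastLower_lastLower :
    mergeLastLower (Sum.inr (Fin.last k) : Fin (l + 1) ⊕ Fin (k + 1)) = Sum.inl (Fin.last l) := by
  simp [mergeLastLower]

@[simp]
lemma lastLowerToUpper_symm_inl_castSucc (i : Fin l) :
    (lastLowerToUpper (k := k)).symm (Sum.inl i.castSucc) = Sum.inl i := by
  simp [lastLowerToUpper]

@[simp]
lemma lastLowerToUpper_symm_inl_last :
    (lastLowerToUpper (k := k)).symm (Sum.inl (Fin.last l)) = Sum.inr (Fin.last k) := by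
  simp [lastLowerToUpper]

@[simp]
lemma lastLowerToUpper_symm_inr (j : Fin k) :
    (lastLowerToUpper (l := l)).symm (Sum.inr j) = Sum.inr j.castSucc := rfl

@[simp]
lemma lastLowerToUpper_inl (i : Fin l) :
    lastLowerToUpper (k := k) (Sum.inl i) = Sum.inl i.castSucc := rfl

@[simp]
lemma lastLowerToUpper_inr_last :
    lastLowerToUpper (l := l) (Sum.inr (Fin.last k)) = Sum.inl (Fin.last l) := by
  simp [lastLowerToUpper]

lemma upSet_comap_liftLower (P : Setoid (Fin l ⊕ Fin (k + 1))) (p : Fin l ⊕ Fin k) :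
    upSet (P.comap liftLower) p = upSet P (liftLower p) := by
  ext i
  simp [liftLower, Setoid.comap_rel]

lemma lowSet_comap_liftLower (P : Setoid (Fin l ⊕ Fin (k + 1))) (p : Fin l ⊕ Fin k) :
    lowSet (P.comap liftLower) p = castSuccPreimage (lowSet P (liftLower p)) := by
  ext j
  simp [liftLower, Setoid.comap_rel]

lemma upSet_comap_liftBoth (P : Setoid (Fin (l + 1) ⊕ Fin (k + 1))) (p : Fin l ⊕ Fin k) :
    upSet (P.comap liftBoth) p = castSuccPreimage (upSet P (liftBoth p)) := by
  ext i
  simp [liftBoth, Setoid.comap_rel]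

lemma lowSet_comap_liftBoth (P : Setoid (Fin (l + 1) ⊕ Fin (k + 1))) (p : Fin l ⊕ Fin k) :
    lowSet (P.comap liftBoth) p = castSuccPreimage (lowSet P (liftBoth p)) := by
  ext j
  simp [liftBoth, Setoid.comap_rel]

end BoundaryMaps

section IsolatedLastLower

variable {Γ : Type*} [Group Γ] {l k : ℕ}

lemma isolated_iff_not_links {Q : Setoid (Fin l ⊕ Fin (k + 1))} :
    (∀ a, Q.r a (Sum.inr (Fin.last k)) ↔ a = Sum.inr (Fin.last k)) ↔
      ¬ LastLowerLinksUpper Q ∧ ¬ LastLowerLinksLower Q := by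
  refine ⟨fun hQ => ⟨fun ⟨i, hi⟩ => ?_, fun ⟨j, hj⟩ => ?_⟩,
    fun ⟨hU, hL⟩ a => ⟨fun ha => ?_, ?_⟩⟩
  · simpa using (hQ _).1 hi
  · simpa [Fin.castSucc_ne_last] using (hQ _).1 hj
  · rcases a with i | j
    · exact (hU ⟨i, ha⟩).elim
    · cases j using Fin.lastCases
      · rfl
      · exact (hL ⟨_, ha⟩).elim
  · rintro rfl
    exact Q.refl _

lemma comap_unliftLower_comap_liftLower {Q : Setoid (Fin l ⊕ Fin (k + 1))}
    (hQ : ∀ a, Q.r a (Sum.inr (Fin.last k)) ↔ a = Sum.inr (Fin.last k)) :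
    (Q.comap liftLower).optionSetoid.comap unliftLower = Q := by
  refine Setoid.comap_optionSetoid_comap Q (fun _ _ => unliftLower_eq_some_iff) fun a b ha => ?_
  rw [unliftLower_eq_none_iff] at ha ⊢
  subst ha
  rw [Q.comm', hQ]

lemma mem_NCprime_iff_of_isolated {x : Fin l → Γ} {g : Fin (k + 1) → Γ}
    {Q : Setoid (Fin l ⊕ Fin (k + 1))}
    (hQ : ∀ a, Q.r a (Sum.inr (Fin.last k)) ↔ a = Sum.inr (Fin.last k)) :
    Q ∈ NCprime x g ↔
      g (Fin.last k) = 1 ∧ Q.comap liftLower ∈ NCprime x fun j => g j.castSucc := by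
  have hlast : ∀ p, Fin.last k ∉ lowSet Q (liftLower p) := fun p h =>
    liftLower_ne_last p ((hQ _).1 (Q.symm (mem_lowSet.1 h)))
  have hisolated : BlockCond x g (upSet Q (Sum.inr (Fin.last k))) (lowSet Q (Sum.inr (Fin.last k)))
      ↔ g (Fin.last k) = 1 := by
    have hU : upSet Q (Sum.inr (Fin.last k)) = ∅ := by ext i; simp [hQ]
    have hL : lowSet Q (Sum.inr (Fin.last k)) = {Fin.last k} := by ext j; simp [hQ]
    rw [hU, hL, blockCond_empty_singleton]
  have hblocks : ∀ p, BlockCond x g (upSet Q (liftLower p)) (lowSet Q (liftLower p)) ↔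
      BlockCond x (fun j => g j.castSucc) (upSet (Q.comap liftLower) p)
        (lowSet (Q.comap liftLower) p) := fun p => by
    rw [upSet_comap_liftLower, lowSet_comap_liftLower,
      blockCond_iff_of_last_notMem_lower (hlast p)]
  constructor
  · intro hmem
    exact ⟨hisolated.1 (hmem.2 _), hmem.1.comap ncMonotone_liftLower,
      fun p => (hblocks p).1 (hmem.2 _)⟩
  · rintro ⟨hg, hmem⟩
    refine mem_NCprime_iff.2 ⟨?_, fun a => ?_⟩
    · rw [← comap_unliftLower_comap_liftLower hQ]
      refine hmem.1.comap_optionSetoid ncMonotone_liftLower (fun _ _ => unliftLower_eq_some_iff)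
        fun a b c ha hc hab hbc => ?_
      rw [unliftLower_eq_none_iff] at ha hc
      subst ha hc
      exact hab.not_gt hbc
    · rcases eq_last_or_eq_liftLower a with rfl | ⟨p, rfl⟩
      · exact hisolated.2 hg
      · exact (hblocks p).2 (hmem.2 p)

lemma ncard_NCprime_isolated (x : Fin l → Γ) (g : Fin (k + 1) → Γ) :
    {P ∈ NCprime x g | ¬ LastLowerLinksUpper P ∧ ¬ LastLowerLinksLower P}.ncard =
      if g (Fin.last k) = 1 then (NCprime x fun j => g j.castSucc).ncard else 0 := by
  simp only [← isolated_iff_not_links]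
  split_ifs with hg
  · refine Set.BijOn.ncard_eq (f := fun Q => Q.comap liftLower)
      (Set.InvOn.bijOn (f' := fun P => P.optionSetoid.comap unliftLower) ⟨?_, ?_⟩ ?_ ?_)
    · exact fun Q hQ => comap_unliftLower_comap_liftLower hQ.2
    · exact fun P _ => Setoid.comap_comap_optionSetoid P fun _ => unliftLower_eq_some_iff.2 rfl
    · exact fun Q hQ => ((mem_NCprime_iff_of_isolated hQ.2).1 hQ.1).2
    · intro P hP
      have hiso : ∀ a, (P.optionSetoid.comap unliftLower).r a (Sum.inr (Fin.last k)) ↔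
          a = Sum.inr (Fin.last k) := fun a => by
        change Option.Rel P.r (unliftLower a) (unliftLower _) ↔ _
        rw [← unliftLower_eq_none_iff, unliftLower_eq_none_iff.2 rfl]
        cases unliftLower a <;> simp
      refine ⟨(mem_NCprime_iff_of_isolated hiso).2 ⟨hg, ?_⟩, hiso⟩
      rwa [Setoid.comap_comap_optionSetoid P fun _ => unliftLower_eq_some_iff.2 rfl]
  · refine (Set.ncard_eq_zero (Set.toFinite _)).2 (Set.eq_empty_of_forall_notMem fun Q hQ => ?_)
    exact hg ((mem_NCprime_iff_of_isolated hQ.2).1 hQ.1).1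

end IsolatedLastLower

section PairedLastLower

variable {Γ : Type*} [Group Γ] {l k : ℕ} {Q : Setoid (Fin (l + 1) ⊕ Fin (k + 1))}

lemma links_of_pair
    (hQ : ∀ a, Q.r a (Sum.inr (Fin.last k)) ↔
      a = Sum.inl (Fin.last l) ∨ a = Sum.inr (Fin.last k)) :
    LastLowerLinksUpper Q ∧ ¬ LastLowerLinksLower Q :=
  ⟨⟨_, (hQ _).2 (Or.inl rfl)⟩,
    fun ⟨j, hj⟩ => by simpa [Fin.castSucc_ne_last] using (hQ _).1 hj⟩

lemma pair_of_links {x : Fin (l + 1) → Γ} {g : Fin (k + 1) → Γ} (hP : Q ∈ NCprime x g)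
    (hU : LastLowerLinksUpper Q) (hL : ¬ LastLowerLinksLower Q) (a : Fin (l + 1) ⊕ Fin (k + 1)) :
    Q.r a (Sum.inr (Fin.last k)) ↔ a = Sum.inl (Fin.last l) ∨ a = Sum.inr (Fin.last k) := by
  refine ⟨fun ha => ?_, ?_⟩
  · rcases a with i | j
    · exact Or.inl (congrArg Sum.inl (eq_last_of_rel_lastLower hP ha))
    · cases j using Fin.lastCases
      · exact Or.inr rfl
      · exact (hL ⟨_, ha⟩).elim
  · rintro (rfl | rfl)
    · exact rel_lastUpper_lastLower hP hU
    · exact Q.refl _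

lemma comap_unliftBoth_comap_liftBoth
    (hQ : ∀ a, Q.r a (Sum.inr (Fin.last k)) ↔
      a = Sum.inl (Fin.last l) ∨ a = Sum.inr (Fin.last k)) :
    (Q.comap liftBoth).optionSetoid.comap unliftBoth = Q := by
  refine Setoid.comap_optionSetoid_comap Q (fun _ _ => unliftBoth_eq_some_iff) fun a b ha => ?_
  rw [unliftBoth_eq_none_iff, ← hQ] at ha ⊢
  exact ⟨fun hab => Q.trans (Q.symm hab) ha, fun hb => Q.trans ha (Q.symm hb)⟩

lemma mem_NCprime_iff_of_pair {x : Fin (l + 1) → Γ} {g : Fin (k + 1) → Γ}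
    (hQ : ∀ a, Q.r a (Sum.inr (Fin.last k)) ↔
      a = Sum.inl (Fin.last l) ∨ a = Sum.inr (Fin.last k)) :
    Q ∈ NCprime x g ↔ x (Fin.last l) = g (Fin.last k) ∧
      Q.comap liftBoth ∈ NCprime (fun i => x i.castSucc) fun j => g j.castSucc := by
  have hnot : ∀ p b, b = Sum.inl (Fin.last l) ∨ b = Sum.inr (Fin.last k) →
      ¬ Q.r b (liftBoth p) := fun p b hb h => by
    have := (hQ _).1 (Q.trans (Q.symm h) ((hQ b).2 hb))
    rcases p with i | j <;> simp [liftBoth, Fin.castSucc_ne_last] at this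
  have hpair : BlockCond x g (upSet Q (Sum.inr (Fin.last k))) (lowSet Q (Sum.inr (Fin.last k)))
      ↔ x (Fin.last l) = g (Fin.last k) := by
    have hU : upSet Q (Sum.inr (Fin.last k)) = {Fin.last l} := by ext i; simp [hQ]
    have hL : lowSet Q (Sum.inr (Fin.last k)) = {Fin.last k} := by ext j; simp [hQ]
    rw [hU, hL, blockCond_singleton_singleton]
  have hblocks : ∀ p, BlockCond x g (upSet Q (liftBoth p)) (lowSet Q (liftBoth p)) ↔
      BlockCond (fun i => x i.castSucc) (fun j => g j.castSucc) (upSet (Q.comap liftBoth) p)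
        (lowSet (Q.comap liftBoth) p) := fun p => by
    rw [upSet_comap_liftBoth, lowSet_comap_liftBoth,
      blockCond_iff_of_last_notMem_upper fun h => hnot p _ (Or.inl rfl) (mem_upSet.1 h),
      blockCond_iff_of_last_notMem_lower fun h => hnot p _ (Or.inr rfl) (mem_lowSet.1 h)]
  constructor
  · intro hmem
    exact ⟨hpair.1 (hmem.2 _), hmem.1.comap ncMonotone_liftBoth,
      fun p => (hblocks p).1 (hmem.2 _)⟩
  · rintro ⟨hxg, hmem⟩
    refine mem_NCprime_iff.2 ⟨?_, fun a => ?_⟩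
    · rw [← comap_unliftBoth_comap_liftBoth hQ]
      refine hmem.1.comap_optionSetoid ncMonotone_liftBoth (fun _ _ => unliftBoth_eq_some_iff)
        fun a b c ha hc hab hbc => ?_
      rw [unliftBoth_eq_none_iff] at ha hc
      rcases ha with rfl | rfl <;> rcases hc with rfl | rfl <;>
        simp only [ncPos, Sum.elim_inl, Sum.elim_inr, Fin.val_last] at hab hbc <;> omega
    · rcases eq_last_or_eq_liftBoth a with ha | ⟨p, rfl⟩
      · rw [upSet_congr ((hQ a).2 ha), lowSet_congr ((hQ a).2 ha)]
        exact hpair.2 hxg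
      · exact (hblocks p).2 (hmem.2 p)

lemma ncard_NCprime_paired (x : Fin (l + 1) → Γ) (g : Fin (k + 1) → Γ) :
    {P ∈ NCprime x g | LastLowerLinksUpper P ∧ ¬ LastLowerLinksLower P}.ncard =
      if x (Fin.last l) = g (Fin.last k) then
        (NCprime (fun i => x i.castSucc) fun j => g j.castSucc).ncard
      else 0 := by
  have hpair : ∀ Q ∈ {P ∈ NCprime x g | LastLowerLinksUpper P ∧ ¬ LastLowerLinksLower P},
      ∀ a, Q.r a (Sum.inr (Fin.last k)) ↔
        a = Sum.inl (Fin.last l) ∨ a = Sum.inr (Fin.last k) :=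
    fun Q hQ => pair_of_links hQ.1 hQ.2.1 hQ.2.2
  split_ifs with hxg
  · refine Set.BijOn.ncard_eq (f := fun Q => Q.comap liftBoth)
      (Set.InvOn.bijOn (f' := fun P => P.optionSetoid.comap unliftBoth) ⟨?_, ?_⟩ ?_ ?_)
    · exact fun Q hQ => comap_unliftBoth_comap_liftBoth (hpair Q hQ)
    · exact fun P _ => Setoid.comap_comap_optionSetoid P fun _ => unliftBoth_eq_some_iff.2 rfl
    · exact fun Q hQ => ((mem_NCprime_iff_of_pair (hpair Q hQ)).1 hQ.1).2
    · intro P hP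
      have hP' : ∀ a, (P.optionSetoid.comap unliftBoth).r a (Sum.inr (Fin.last k)) ↔
          a = Sum.inl (Fin.last l) ∨ a = Sum.inr (Fin.last k) := fun a => by
        change Option.Rel P.r (unliftBoth a) (unliftBoth _) ↔ _
        rw [← unliftBoth_eq_none_iff, unliftBoth_eq_none_iff.2 (Or.inr rfl)]
        cases unliftBoth a <;> simp
      refine ⟨(mem_NCprime_iff_of_pair hP').2 ⟨hxg, ?_⟩, links_of_pair hP'⟩
      rwa [Setoid.comap_comap_optionSetoid P fun _ => unliftBoth_eq_some_iff.2 rfl]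
  · refine (Set.ncard_eq_zero (Set.toFinite _)).2 (Set.eq_empty_of_forall_notMem fun Q hQ => ?_)
    exact hxg ((mem_NCprime_iff_of_pair (hpair Q hQ)).1 hQ.1).1

end PairedLastLower

section MergedLastLower

variable {Γ : Type*} [Group Γ] {l k : ℕ} {Q : Setoid (Fin (l + 1) ⊕ Fin (k + 1))}

lemma rel_liftLower_mergeLastLower (hQ : Q.r (Sum.inl (Fin.last l)) (Sum.inr (Fin.last k)))
    (a : Fin (l + 1) ⊕ Fin (k + 1)) : Q.r (liftLower (mergeLastLower a)) a := by
  rcases eq_last_or_eq_liftLower a with rfl | ⟨p, rfl⟩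
  · simpa [liftLower] using hQ
  · rw [mergeLastLower_liftLower]

lemma comap_mergeLastLower_comap_liftLower
    (hQ : Q.r (Sum.inl (Fin.last l)) (Sum.inr (Fin.last k))) :
    (Q.comap liftLower).comap mergeLastLower = Q :=
  Setoid.ext fun a b =>
    ⟨fun h => Q.trans (Q.symm (rel_liftLower_mergeLastLower hQ a))
        (Q.trans h (rel_liftLower_mergeLastLower hQ b)),
      fun h => Q.trans (rel_liftLower_mergeLastLower hQ a)
        (Q.trans h (Q.symm (rel_liftLower_mergeLastLower hQ b)))⟩

lemma comap_liftLower_comap_mergeLastLower (P : Setoid (Fin (l + 1) ⊕ Fin k)) :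
    (P.comap mergeLastLower).comap liftLower = P :=
  Setoid.ext fun a b => by simp [Setoid.comap_rel]

lemma mem_NCprime_and_linksLower_iff_of_rel_lastUpper {x : Fin (l + 1) → Γ}
    {g : Fin (k + 1) → Γ} (hQ : Q.r (Sum.inl (Fin.last l)) (Sum.inr (Fin.last k))) :
    Q ∈ NCprime x g ∧ LastLowerLinksLower Q ↔
      Q.comap liftLower ∈ NCprime
        (Fin.snoc (fun i : Fin l => x i.castSucc) (x (Fin.last l) * (g (Fin.last k))⁻¹))
        fun j => g j.castSucc := by
  have hblocks : LastLowerLinksLower Q → ∀ p,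
      (BlockCond x g (upSet Q (liftLower p)) (lowSet Q (liftLower p)) ↔
        BlockCond
          (Fin.snoc (fun i : Fin l => x i.castSucc) (x (Fin.last l) * (g (Fin.last k))⁻¹))
          (fun j => g j.castSucc) (upSet (Q.comap liftLower) p)
          (lowSet (Q.comap liftLower) p)) := by
    rintro ⟨j, hj⟩ p
    rw [upSet_comap_liftLower, lowSet_comap_liftLower]
    refine blockCond_iff_mergeLast ?_ fun h => ⟨j, ?_⟩
    · simp only [mem_upSet, mem_lowSet]
      exact ⟨fun h => Q.trans (Q.symm hQ) h, fun h => Q.trans hQ h⟩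
    · simpa using Q.trans hj (mem_lowSet.1 h)
  constructor
  · rintro ⟨hmem, hL⟩
    exact ⟨hmem.1.comap ncMonotone_liftLower, fun p => (hblocks hL p).1 (hmem.2 _)⟩
  · intro hmem
    have hL : LastLowerLinksLower Q := by
      obtain ⟨j, hj⟩ := exists_rel_inr hmem (Sum.inl (Fin.last l))
      exact ⟨j, Q.trans hj hQ⟩
    refine ⟨mem_NCprime_iff.2 ⟨?_, fun a => ?_⟩, hL⟩
    · rw [← comap_mergeLastLower_comap_liftLower hQ]
      exact hmem.1.comap ncMonotone_mergeLastLower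
    · have ha := rel_liftLower_mergeLastLower hQ a
      rw [← upSet_congr ha, ← lowSet_congr ha]
      exact (hblocks hL _).2 (hmem.2 _)

lemma ncard_NCprime_merged (x : Fin (l + 1) → Γ) (g : Fin (k + 1) → Γ) :
    {P ∈ NCprime x g | LastLowerLinksUpper P ∧ LastLowerLinksLower P}.ncard =
      (NCprime (Fin.snoc (fun i : Fin l => x i.castSucc) (x (Fin.last l) * (g (Fin.last k))⁻¹))
        fun j => g j.castSucc).ncard := by
  refine Set.BijOn.ncard_eq (f := fun Q => Q.comap liftLower)
    (Set.InvOn.bijOn (f' := fun P => P.comap mergeLastLower) ⟨?_, ?_⟩ ?_ ?_)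
  · exact fun Q hQ => comap_mergeLastLower_comap_liftLower (rel_lastUpper_lastLower hQ.1 hQ.2.1)
  · exact fun P _ => comap_liftLower_comap_mergeLastLower P
  · exact fun Q hQ => (mem_NCprime_and_linksLower_iff_of_rel_lastUpper
      (rel_lastUpper_lastLower hQ.1 hQ.2.1)).1 ⟨hQ.1, hQ.2.2⟩
  · intro P hP
    have hmerged : (P.comap mergeLastLower).r (Sum.inl (Fin.last l)) (Sum.inr (Fin.last k)) := by
      simp [Setoid.comap_rel, mergeLastLower]
    obtain ⟨hmem, hL⟩ := (mem_NCprime_and_linksLower_iff_of_rel_lastUpper hmerged).2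
      (by rwa [comap_liftLower_comap_mergeLastLower])
    exact ⟨hmem, ⟨_, hmerged⟩, hL⟩

end MergedLastLower

section RelabelledLastLower

variable {Γ : Type*} [Group Γ] {l k : ℕ} {Q : Setoid (Fin l ⊕ Fin (k + 1))}

lemma mem_NCprime_and_linksLower_iff_of_not_linksUpper {x : Fin l → Γ}
    {g : Fin (k + 1) → Γ} (hQ : ¬ LastLowerLinksUpper Q) :
    Q ∈ NCprime x g ∧ LastLowerLinksLower Q ↔
      Q.comap lastLowerToUpper.symm ∈ NCprime (Fin.snoc x (g (Fin.last k))⁻¹)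
        fun j => g j.castSucc := by
  have hblocks : LastLowerLinksLower Q → ∀ p,
      (BlockCond x g (upSet Q (lastLowerToUpper.symm p)) (lowSet Q (lastLowerToUpper.symm p)) ↔
        BlockCond (Fin.snoc x (g (Fin.last k))⁻¹) (fun j => g j.castSucc)
          (upSet (Q.comap lastLowerToUpper.symm) p)
          (lowSet (Q.comap lastLowerToUpper.symm) p)) := by
    rintro ⟨j, hj⟩ p
    have hL : lowSet (Q.comap lastLowerToUpper.symm) p =
        castSuccPreimage (lowSet Q (lastLowerToUpper.symm p)) := by
      ext j
      simp [Setoid.comap_rel]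
    rw [hL]
    refine blockCond_iff_lastLowerToUpper ?_ ?_ fun h => ⟨?_, ⟨j, ?_⟩⟩
    · ext i
      simp [Setoid.comap_rel]
    · simp [Setoid.comap_rel]
    · ext i
      simp only [mem_upSet, Finset.notMem_empty, iff_false]
      exact fun hi => hQ ⟨i, Q.trans hi (Q.symm (mem_lowSet.1 h))⟩
    · simpa using Q.trans hj (mem_lowSet.1 h)
  constructor
  · rintro ⟨hmem, hL⟩
    exact ⟨hmem.1.comap ncMonotone_lastLowerToUpper_symm, fun p => (hblocks hL p).1 (hmem.2 _)⟩
  · intro hmem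
    have hL : LastLowerLinksLower Q := by
      obtain ⟨j, hj⟩ := exists_rel_inr hmem (Sum.inl (Fin.last l))
      exact ⟨j, by simpa [Setoid.comap_rel] using hj⟩
    have hQ' : (Q.comap lastLowerToUpper.symm).comap lastLowerToUpper = Q :=
      Setoid.ext fun a b => by simp [Setoid.comap_rel]
    refine ⟨mem_NCprime_iff.2 ⟨?_, fun a => ?_⟩, hL⟩
    · rw [← hQ']
      exact hmem.1.comap ncMonotone_lastLowerToUpper
    · simpa using (hblocks hL (lastLowerToUpper a)).2 (hmem.2 _)

lemma ncard_NCprime_relabelled (x : Fin l → Γ) (g : Fin (k + 1) → Γ) :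
    {P ∈ NCprime x g | ¬ LastLowerLinksUpper P ∧ LastLowerLinksLower P}.ncard =
      (NCprime (Fin.snoc x (g (Fin.last k))⁻¹) fun j => g j.castSucc).ncard := by
  refine Set.BijOn.ncard_eq (f := fun Q => Q.comap lastLowerToUpper.symm)
    (Set.InvOn.bijOn (f' := fun P => P.comap lastLowerToUpper) ⟨?_, ?_⟩ ?_ ?_)
  · exact fun Q _ => Setoid.ext fun a b => by simp [Setoid.comap_rel]
  · exact fun P _ => Setoid.ext fun a b => by simp [Setoid.comap_rel]
  · exact fun Q hQ =>
      (mem_NCprime_and_linksLower_iff_of_not_linksUpper hQ.2.1).1 ⟨hQ.1, hQ.2.2⟩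
  · intro P hP
    have hU : ¬ LastLowerLinksUpper (P.comap lastLowerToUpper) := fun ⟨i, hi⟩ =>
      Fin.castSucc_ne_last i (eq_of_rel_inl_inl hP (by simpa [Setoid.comap_rel] using hi))
    obtain ⟨hmem, hL⟩ := (mem_NCprime_and_linksLower_iff_of_not_linksUpper hU).2 (by
      convert hP
      exact Setoid.ext fun a b => by simp [Setoid.comap_rel])
    exact ⟨hmem, hU, hL⟩

end RelabelledLastLower

section Recursion

variable {Γ : Type*} [Group Γ] {l k : ℕ}

lemma ncard_NCprime_of_lower_zero (x : Fin l → Γ) (g : Fin 0 → Γ) :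
    (NCprime x g).ncard = if l = 0 then 1 else 0 := by
  split_ifs with hl
  · subst hl
    have hbot : NCprime x g = {⊥} := Set.eq_singleton_iff_unique_mem.2
      ⟨⟨fun ⟨a, _⟩ => isEmptyElim a, fun p => isEmptyElim p⟩,
        fun P _ => Setoid.ext fun a => isEmptyElim a⟩
    rw [hbot, Set.ncard_singleton]
  · obtain ⟨l, rfl⟩ := Nat.exists_eq_succ_of_ne_zero hl
    refine (Set.ncard_eq_zero (Set.toFinite _)).2 (Set.eq_empty_of_forall_notMem fun P hP => ?_)
    obtain ⟨j, -⟩ := exists_rel_inr hP (Sum.inl 0)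
    exact isEmptyElim j

lemma ncard_NCprime_of_upper_zero (x : Fin 0 → Γ) (g : Fin (k + 1) → Γ) :
    (NCprime x g).ncard = (NCprime (Fin.snoc x (g (Fin.last k))⁻¹) fun j => g j.castSucc).ncard +
      if g (Fin.last k) = 1 then (NCprime x fun j => g j.castSucc).ncard else 0 := by
  have hU : ∀ P : Setoid (Fin 0 ⊕ Fin (k + 1)), ¬ LastLowerLinksUpper P := fun _ ⟨i, _⟩ =>
    isEmptyElim i
  rw [Set.ncard_eq_add_add_add _ LastLowerLinksUpper LastLowerLinksLower,
    ncard_NCprime_relabelled, ncard_NCprime_isolated]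
  simp [hU]

lemma ncard_NCprime_of_upper_succ (x : Fin (l + 1) → Γ) (g : Fin (k + 1) → Γ) :
    (NCprime x g).ncard =
      (if x (Fin.last l) = g (Fin.last k) then
        (NCprime (fun i => x i.castSucc) fun j => g j.castSucc).ncard else 0) +
      (NCprime (Fin.snoc (fun i : Fin l => x i.castSucc) (x (Fin.last l) * (g (Fin.last k))⁻¹))
        fun j => g j.castSucc).ncard +
      (NCprime (Fin.snoc x (g (Fin.last k))⁻¹) fun j => g j.castSucc).ncard +
      if g (Fin.last k) = 1 then (NCprime x fun j => g j.castSucc).ncard else 0 := by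
  rw [Set.ncard_eq_add_add_add _ LastLowerLinksUpper LastLowerLinksLower, ncard_NCprime_merged,
    ncard_NCprime_paired, ncard_NCprime_relabelled, ncard_NCprime_isolated,
    add_comm (Set.ncard _) (ite _ _ _)]

end Recursion

theorem Pk_apply_ofFn {Γ : Type*} [Group Γ] {k l : ℕ} (g : Fin k → Γ) (x : Fin l → Γ) :
    Pk g (List.ofFn x) = (NCprime x g).ncard := by
  induction k generalizing l with
  | zero =>
    rw [Pk_zero, ncard_NCprime_of_lower_zero, Finsupp.single_apply]
    simp only [List.nil_eq, List.ofFn_eq_nil_iff, Nat.cast_ite, Nat.cast_one, Nat.cast_zero]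
  | succ k ih =>
    cases l with
    | zero =>
      rw [Pk_succ, List.ofFn_zero, fmul_letterFactor_apply_nil, ncard_NCprime_of_upper_zero]
      push_cast
      rw [← ih, ← ih, List.ofFn_snoc, List.ofFn_zero, List.nil_append]
    | succ l =>
      have hx : List.ofFn x = List.ofFn (fun i => x i.castSucc) ++ [x (Fin.last l)] := by
        rw [List.ofFn_succ', List.concat_eq_append]
      rw [Pk_succ, hx, fmul_letterFactor_apply_append_singleton, ← hx, ← List.ofFn_snoc,
        ← List.ofFn_snoc, ih, ih, ih, ih, ncard_NCprime_of_upper_succ]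
      push_cast
      rfl

theorem coeff_Pk_eq_card_NCprime_general {Γ : Type*} [Group Γ] (k l : ℕ)
    (g : Fin k → Γ) (x : Fin l → Γ) :
    (Pk g) (List.ofFn x) =
      (Nat.card {P : Setoid (Fin l ⊕ Fin k) // P ∈ NCprime x g} : ℤ) :=
  Pk_apply_ofFn g x

/-- Lemma 2.27: if `σ : D_σ → {1,…,l}` is a surjective non-decreasing map on a subset
`D_σ ⊆ {1,…,k}` and `x_j = Π_{σ(i)=j} g_i`, then the coefficient of `b_x` in
`P_k = (b_{g_1} + δ_{g_1,e}1) ⊗ ⋯ ⊗ (b_{g_k} + δ_{g_k,e}1)` equals the number of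
non-crossing partitions in `NC'_Γ((x_1,…,x_l); (g_1,…,g_k))`. -/
theorem coeff_Pk_eq_card_NCprime {Γ : Type*} [Group Γ] (k l : ℕ)
    (g : Fin k → Γ) (D : Finset (Fin k)) (σ : Fin k → Fin l)
    (hsurj : ∀ j : Fin l, ∃ i ∈ D, σ i = j)
    (hmono : ∀ i ∈ D, ∀ i' ∈ D, i ≤ i' → σ i ≤ σ i')
    (x : Fin l → Γ) (hx : ∀ j : Fin l, x j = orderedProd g (D.filter fun i => σ i = j)) :
    (Pk g) (List.ofFn x) =
      (Nat.card {P : Setoid (Fin l ⊕ Fin k) // P ∈ NCprime x g} : ℤ) :=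
  coeff_Pk_eq_card_NCprime_general k l g x
end

section
/- Let H = H_1 ⊕ H_2 be an orthogonal decomposition of a complex Hilbert space, z = x + y with x ∈ H_1, y ∈ H_2, and let v : H → H ⊗ K be an isometry into a tensor product with another Hilbert space K, and let ξ ∈ K be a unit vector such that ⟨v x, x ⊗ ξ⟩ = 0 (note ⟨v y, v x⟩ = ⟨y, x⟩ = 0). Then ‖y‖² ≥ ‖x‖² − 2‖x‖·‖z ⊗ ξ − v z‖. -/
open scoped InnerProductSpace

/-- Abstract form of inequality (3.2): `H` is a Hilbert space, `z = x + y` with `x ⊥ y`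
(coming from an orthogonal decomposition `H = H₁ ⊕ H₂`), `ι : H → H ⊗ K`, `ζ ↦ ζ ⊗ ξ`,
is the isometry given by a unit vector `ξ ∈ K`, and `v : H → H ⊗ K` is an isometry whose
value on `x` is orthogonal to `x ⊗ ξ`. Then `‖y‖² ≥ ‖x‖² − 2‖x‖·‖z ⊗ ξ − v z‖`. -/
theorem norm_sq_lower_bound_of_isometry
    {H H' : Type*} [NormedAddCommGroup H] [InnerProductSpace ℂ H]
    [NormedAddCommGroup H'] [InnerProductSpace ℂ H']
    (ι v : H →ₗᵢ[ℂ] H') (x y z : H)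
    (hz : z = x + y) (hxy : ⟪x, y⟫_ℂ = 0)
    (hvx : ⟪v x, ι x⟫_ℂ = 0) :
    ‖y‖ ^ 2 ≥ ‖x‖ ^ 2 - 2 * ‖x‖ * ‖ι z - v z‖ := by
  have hyx : ⟪y, x⟫_ℂ = 0 := by
    rw [← inner_conj_symm, hxy, map_zero]
  have e1 : ⟪ι z, ι x⟫_ℂ = (‖x‖ : ℂ) ^ 2 := by
    rw [ι.inner_map_map, hz, inner_add_left, hyx, add_zero,
      inner_self_eq_norm_sq_to_K]; norm_cast
  have e2 : ⟪v z, ι x⟫_ℂ = ⟪v y, ι x⟫_ℂ := by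
    rw [hz, map_add, inner_add_left, hvx, zero_add]
  have hx2 : ‖x‖ ^ 2 ≤ ‖ι z - v z‖ * ‖x‖ + ‖y‖ * ‖x‖ := by
    have key : (‖x‖ : ℂ) ^ 2 = ⟪ι z - v z, ι x⟫_ℂ + ⟪v y, ι x⟫_ℂ := by
      rw [inner_sub_left, ← e2, ← e1]; ring
    calc ‖x‖ ^ 2 = ‖((‖x‖ : ℂ) ^ 2)‖ := by
          rw [norm_pow, Complex.norm_real, Real.norm_eq_abs, abs_of_nonneg (norm_nonneg x)]
      _ = ‖⟪ι z - v z, ι x⟫_ℂ + ⟪v y, ι x⟫_ℂ‖ := by rw [key]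
      _ ≤ ‖⟪ι z - v z, ι x⟫_ℂ‖ + ‖⟪v y, ι x⟫_ℂ‖ := norm_add_le _ _
      _ ≤ ‖ι z - v z‖ * ‖ι x‖ + ‖v y‖ * ‖ι x‖ := by
          gcongr <;> exact norm_inner_le_norm _ _
      _ = ‖ι z - v z‖ * ‖x‖ + ‖y‖ * ‖x‖ := by rw [ι.norm_map, v.norm_map]
  have h0 : (0:ℝ) ≤ ‖x‖ := norm_nonneg x
  have h1 : (0:ℝ) ≤ ‖y‖ := norm_nonneg y
  have h2 : (0:ℝ) ≤ ‖ι z - v z‖ := norm_nonneg _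
  nlinarith [sq_nonneg (‖x‖ - ‖y‖), sq_nonneg (‖x‖ + ‖y‖)]
end

section
/- Let ‖x‖, ‖y‖, ‖z‖, A, B, C be nonnegative reals satisfying: ‖z‖² = ‖x‖² + ‖y‖², ‖x‖ ≤ ‖z‖, ‖y‖ ≤ ‖z‖, ‖y‖² ≥ ‖x‖² − 2‖x‖A, and ‖x‖² ≥ 2‖y‖² − 2‖y‖(B + C). Then ‖z‖² ≤ 14·‖z‖·max{A, B, C}, i.e., ‖z‖ ≤ 14·max{A, B, C}. -/
/-!
Eliminating `x²` between the two hypotheses bounds `y² ≤ 2xA + 2y(B + C) ≤ 2z(A + B + C)`;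
feeding this back into the first one gives `x² ≤ 2z(2A + B + C)`. Adding the two bounds,
`z² ≤ 2z(3A + 2B + 2C) ≤ 14·z·max{A, B, C}`, and dividing by `z` gives the second claim.
-/

section PythagoreanBounds

variable {x y z a b : ℝ}

lemma sq_right_le_of_sq_ge (ha : 0 ≤ a) (hb : 0 ≤ b) (hxz : x ≤ z) (hyz : y ≤ z)
    (h1 : y ^ 2 ≥ x ^ 2 - 2 * x * a) (h2 : x ^ 2 ≥ 2 * y ^ 2 - 2 * y * b) :
    y ^ 2 ≤ 2 * z * (a + b) := by
  have hxa : x * a ≤ z * a := mul_le_mul_of_nonneg_right hxz ha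
  have hyb : y * b ≤ z * b := mul_le_mul_of_nonneg_right hyz hb
  linarith

lemma sq_left_le_of_sq_ge (ha : 0 ≤ a) (hb : 0 ≤ b) (hxz : x ≤ z) (hyz : y ≤ z)
    (h1 : y ^ 2 ≥ x ^ 2 - 2 * x * a) (h2 : x ^ 2 ≥ 2 * y ^ 2 - 2 * y * b) :
    x ^ 2 ≤ 2 * z * (2 * a + b) := by
  have hy := sq_right_le_of_sq_ge ha hb hxz hyz h1 h2
  have hxa : x * a ≤ z * a := mul_le_mul_of_nonneg_right hxz ha
  linarith

lemma sq_le_of_sq_eq_add_sq (ha : 0 ≤ a) (hb : 0 ≤ b) (hxz : x ≤ z) (hyz : y ≤ z)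
    (hsum : z ^ 2 = x ^ 2 + y ^ 2)
    (h1 : y ^ 2 ≥ x ^ 2 - 2 * x * a) (h2 : x ^ 2 ≥ 2 * y ^ 2 - 2 * y * b) :
    z ^ 2 ≤ 2 * z * (3 * a + 2 * b) := by
  have hx := sq_left_le_of_sq_ge ha hb hxz hyz h1 h2
  have hy := sq_right_le_of_sq_ge ha hb hxz hyz h1 h2
  linarith

end PythagoreanBounds

lemma le_of_sq_le_mul {z c : ℝ} (hc : 0 ≤ c) (h : z ^ 2 ≤ z * c) : z ≤ c := by
  by_contra! hcz
  have hz : 0 < z := hc.trans_lt hcz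
  have : z * c < z ^ 2 := by rw [sq]; exact mul_lt_mul_of_pos_left hcz hz
  linarith

theorem fourteen_epsilon_arithmetic_general (x y z A B C : ℝ)
    (hz : 0 ≤ z) (hA : 0 ≤ A) (hB : 0 ≤ B) (hC : 0 ≤ C)
    (hsum : z ^ 2 = x ^ 2 + y ^ 2) (hxz : x ≤ z) (hyz : y ≤ z)
    (h1 : y ^ 2 ≥ x ^ 2 - 2 * x * A)
    (h2 : x ^ 2 ≥ 2 * y ^ 2 - 2 * y * (B + C)) :
    z ^ 2 ≤ 14 * z * max A (max B C) ∧ z ≤ 14 * max A (max B C) := by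
  set M := max A (max B C)
  have hAM : A ≤ M := le_max_left _ _
  have hBM : B ≤ M := (le_max_left _ _).trans (le_max_right _ _)
  have hCM : C ≤ M := (le_max_right _ _).trans (le_max_right _ _)
  have hsq := sq_le_of_sq_eq_add_sq hA (add_nonneg hB hC) hxz hyz hsum h1 h2
  have hweights : 3 * A + 2 * (B + C) ≤ 7 * M := by linarith
  have key : z ^ 2 ≤ z * (14 * M) :=
    hsq.trans (by linarith [mul_le_mul_of_nonneg_left hweights hz])
  exact ⟨by linarith, le_of_sq_le_mul (by linarith) key⟩

/-- The arithmetic core of the '14 − ε' argument: if nonnegative reals satisfy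
`z² = x² + y²`, `x ≤ z`, `y ≤ z`, `y² ≥ x² − 2xA`, and `x² ≥ 2y² − 2y(B + C)`,
then `z² ≤ 14·z·max{A, B, C}`, i.e. `z ≤ 14·max{A, B, C}`. -/
theorem fourteen_epsilon_arithmetic (x y z A B C : ℝ)
    (hx : 0 ≤ x) (hy : 0 ≤ y) (hz : 0 ≤ z) (hA : 0 ≤ A) (hB : 0 ≤ B) (hC : 0 ≤ C)
    (hsum : z ^ 2 = x ^ 2 + y ^ 2) (hxz : x ≤ z) (hyz : y ≤ z)
    (h1 : y ^ 2 ≥ x ^ 2 - 2 * x * A)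
    (h2 : x ^ 2 ≥ 2 * y ^ 2 - 2 * y * (B + C)) :
    z ^ 2 ≤ 14 * z * max A (max B C) ∧ z ≤ 14 * max A (max B C) :=
  fourteen_epsilon_arithmetic_general x y z A B C hz hA hB hC hsum hxz hyz h1 h2
end

section
/- The submonoid S of M' = ℕ * Γ generated by the elements {a z_g a : g ∈ Γ} is a free monoid on the set Γ; that is, the monoid homomorphism from the free monoid ⟨Γ⟩ of words over Γ to S sending the letter g to a z_g a is an isomorphism, and it intertwines the involutions: (a z_g a)^* = a z_{g^{-1}} a corresponds to the word involution (g_1,…,g_k)^- = (g_k^{-1},…,g_1^{-1}). -/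
open Monoid Monoid.Coprod

/-- The free product monoid `M' = ℕ ∗ Γ`, generated by a symbol `a` (the generator of
`ℕ`, written multiplicatively) and the elements `z_g` (`g ∈ Γ`). -/
abbrev Mprime (Γ : Type*) [Group Γ] := Monoid.Coprod (Multiplicative ℕ) Γ

/-- The generator `a` of `M' = ℕ ∗ Γ`. -/
def aGen (Γ : Type*) [Group Γ] : Mprime Γ := inl (Multiplicative.ofAdd 1)

/-- The submonoid `S` of `M' = ℕ ∗ Γ` generated by the elements `a z_g a`, `g ∈ Γ`. -/
def Smonoid (Γ : Type*) [Group Γ] : Submonoid (Mprime Γ) :=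
  Submonoid.closure {x | ∃ g : Γ, x = aGen Γ * inr g * aGen Γ}

/-- The monoid homomorphism from the free monoid of words over `Γ` to `M' = ℕ ∗ Γ`
sending the letter `g` to `a z_g a`. -/
def wordsToS (Γ : Type*) [Group Γ] : FreeMonoid Γ →* Mprime Γ :=
  FreeMonoid.lift fun g => aGen Γ * inr g * aGen Γ

/-- The involution of `M' = ℕ ∗ Γ` (an anti-automorphism): it fixes `a` and sends
`z_g` to `z_{g⁻¹}`, reversing products. It is obtained from the monoid homomorphism
`M' →* M'ᵐᵒᵖ` determined by `a ↦ op a`, `z_g ↦ op z_{g⁻¹}`. -/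
noncomputable def MprimeStar (Γ : Type*) [Group Γ] : Mprime Γ → Mprime Γ :=
  fun x =>
    (Monoid.Coprod.lift
      (MonoidHom.mk ⟨fun n => MulOpposite.op ((inl n : Mprime Γ)), by simp⟩
        (fun m n => by
          simp only [← MulOpposite.op_mul, ← map_mul]; rw [mul_comm]))
      ((MonoidHom.op (inr : Γ →* Mprime Γ)).comp (MulEquiv.inv' Γ).toMonoidHom) x).unop

/-- The involution on words over `Γ`: `(g_1,…,g_k)^- = (g_k⁻¹,…,g_1⁻¹)`. -/
def wInv {Γ : Type*} [Group Γ] (w : FreeMonoid Γ) : FreeMonoid Γ :=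
  FreeMonoid.ofList ((w.toList.map (·⁻¹)).reverse)

/-
`M' = ℕ ∗ Γ` acts on `Γ × List Γ`: `z_g` multiplies the first coordinate by `g`, and `a`
pushes the first coordinate onto the list and resets it to `1`. Starting from `(1, [])`,
`a z_{g_1} a ⋯ a z_{g_k} a` produces the list `[g_1, 1, …, g_k, 1]`, which determines the
word, so `g ↦ a z_g a` is injective. Both sides of the involution identity are
anti-homomorphisms in the word, so it suffices to compare them on letters.
-/

theorem List.flatMap_pair_injective {α : Type*} (c : α) :
    Function.Injective fun l : List α => l.flatMap fun x => [x, c] := by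
  intro l₁
  induction l₁ with
  | nil => rintro (_ | _) h <;> simp_all
  | cons x l₁ ih =>
    rintro (_ | ⟨y, l₂⟩) h
    · simp at h
    · simp only [List.flatMap_cons, List.cons_append, List.nil_append, List.cons.injEq] at h
      rw [h.1, ih h.2.2]

namespace Mprime

variable {Γ : Type*} [Group Γ]

variable (Γ) in
def stackAction : Mprime Γ →* Function.End (Γ × List Γ) :=
  lift (powersHom _ (fun p => (1, p.1 :: p.2) : Function.End (Γ × List Γ)))
    { toFun := fun g p => (g * p.1, p.2)
      map_one' := funext fun p => Prod.ext (one_mul p.1) rfl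
      map_mul' := fun g h => funext fun p => Prod.ext (mul_assoc g h p.1) rfl }

lemma stackAction_mul_apply (x y : Mprime Γ) (p : Γ × List Γ) :
    stackAction Γ (x * y) p = stackAction Γ x (stackAction Γ y p) := by
  rw [map_mul]; rfl

lemma stackAction_aGen (p : Γ × List Γ) : stackAction Γ (aGen Γ) p = (1, p.1 :: p.2) :=
  rfl

lemma stackAction_inr (g : Γ) (p : Γ × List Γ) : stackAction Γ (inr g) p = (g * p.1, p.2) :=
  rfl

lemma wordsToS_of (g : Γ) : wordsToS Γ (FreeMonoid.of g) = aGen Γ * inr g * aGen Γ :=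
  FreeMonoid.lift_eval_of _ g

lemma stackAction_wordsToS (w : FreeMonoid Γ) :
    stackAction Γ (wordsToS Γ w) (1, []) = (1, w.toList.flatMap fun g => [g, 1]) := by
  induction w using FreeMonoid.inductionOn' with
  | one => rfl
  | of_mul g w ih =>
    simp [stackAction_mul_apply, ih, wordsToS_of, stackAction_aGen, stackAction_inr]

theorem wordsToS_injective : Function.Injective (wordsToS Γ) := fun v w h => by
  have hstack := congrArg (fun x => (stackAction Γ x (1, [])).2) h
  simp only [stackAction_wordsToS] at hstack
  exact FreeMonoid.toList.injective (List.flatMap_pair_injective 1 hstack)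

theorem mrange_wordsToS : MonoidHom.mrange (wordsToS Γ) = Smonoid Γ := by
  rw [wordsToS, FreeMonoid.mrange_lift, Smonoid]
  simp only [Set.range, eq_comm]

lemma MprimeStar_mul (x y : Mprime Γ) :
    MprimeStar Γ (x * y) = MprimeStar Γ y * MprimeStar Γ x := by
  rw [MprimeStar, map_mul]; rfl

lemma MprimeStar_aGen : MprimeStar Γ (aGen Γ) = aGen Γ := rfl

lemma MprimeStar_inr (g : Γ) : MprimeStar Γ (inr g) = inr g⁻¹ := rfl

lemma wInv_of_mul (g : Γ) (w : FreeMonoid Γ) :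
    wInv (FreeMonoid.of g * w) = wInv w * FreeMonoid.of g⁻¹ := by
  simp [wInv]

theorem MprimeStar_wordsToS (w : FreeMonoid Γ) :
    MprimeStar Γ (wordsToS Γ w) = wordsToS Γ (wInv w) := by
  induction w using FreeMonoid.inductionOn' with
  | one => rfl
  | of_mul g w ih =>
    rw [map_mul, MprimeStar_mul, ih, wInv_of_mul, map_mul, wordsToS_of, wordsToS_of,
      MprimeStar_mul, MprimeStar_mul, MprimeStar_aGen, MprimeStar_inr, mul_assoc]

end Mprime

/-- The submonoid `S ⊆ ℕ ∗ Γ` generated by `{a z_g a : g ∈ Γ}` is a free monoid on `Γ`: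
the monoid homomorphism `⟨Γ⟩ → M'` sending `g` to `a z_g a` is injective with range `S`
(hence an isomorphism of `⟨Γ⟩` onto `S`), and it intertwines the involutions:
`(a z_{g_1} a ⋯ a z_{g_k} a)^* = a z_{g_k⁻¹} a ⋯ a z_{g_1⁻¹} a`. -/
theorem S_free_monoid_on_Gamma (Γ : Type*) [Group Γ] :
    Function.Injective (wordsToS Γ) ∧
    MonoidHom.mrange (wordsToS Γ) = Smonoid Γ ∧
    ∀ w : FreeMonoid Γ, MprimeStar Γ (wordsToS Γ w) = wordsToS Γ (wInv w) :=
  ⟨Mprime.wordsToS_injective, Mprime.mrange_wordsToS, Mprime.MprimeStar_wordsToS⟩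
end
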